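/- arXiv:0911.3887 — 13 statements merged into one kernel-verified Lean document; each statement's English description precedes it below -/
import Mathlib

section
/- Fix n : ℕ and an Appell sequence A : ℕ → ℚ[X]. Let φ_A : MvPolynomial (Fin (n+1)) ℚ →ₐ ℚ[X] send the variable a_i to A i, and let D(S) = ∑_{i=1}^{n} i · a_{i−1} · (∂S/∂a_i). If S ∈ MvPolynomial (Fin (n+1)) ℚ satisfies D(S) = 0 (i.e. S is a semi-invariant), then the polynomial φ_A(S) = S(A_0(x),…,A_n(x)) ∈ ℚ[X] is constant; explicitly, φ_A(S) = Polynomial.C (MvPolynomial.eval (fun i => (A i).eval 0) S). -/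
/-!
Substituting `a_i ↦ A_i` turns `∂/∂a_i` into the chain rule factor `A_i'`, and the Appell
relations `A_0' = 0`, `A_i' = i A_{i-1}` make this chain rule read `(φ_A S)' = φ_A (D S)`.
So a semi-invariant is sent to a polynomial with zero derivative, i.e. a constant, which is its
value at `0`.
-/

open MvPolynomial
open Polynomial (derivative derivative_mul eq_C_of_derivative_eq_zero
  coeff_zero_eq_eval_zero)
open scoped Polynomial

section

variable {R σ : Type*} [CommSemiring R]

theorem MvPolynomial.derivative_aeval [Fintype σ] (A : σ → R[X])
    (S : MvPolynomial σ R) :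
    derivative (aeval A S) = ∑ i, aeval A (pderiv i S) * derivative (A i) := by
  classical
  induction S using MvPolynomial.induction_on with
  | C a => simp
  | add p q hp hq => simp [hp, hq, Finset.sum_add_distrib, add_mul]
  | mul_X p i hp =>
      simp only [map_mul, aeval_X, derivative_mul, hp, pderiv_mul, pderiv_X, map_add, add_mul]
      rw [Finset.sum_add_distrib, Finset.sum_mul]
      congr 1
      · exact Finset.sum_congr rfl fun j _ => by ring
      · simp [Pi.single_apply, apply_ite, mul_comm]

theorem MvPolynomial.eval_aeval (A : σ → R[X]) (x : R) (S : MvPolynomial σ R) :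
    (aeval A S).eval x = MvPolynomial.eval (fun i => (A i).eval x) S := by
  rw [← Polynomial.coe_aeval_eq_eval, comp_aeval_apply]
  rfl

end

/-- The derivation `D = ∑_{i=1}^{n} i a_{i-1} ∂/∂a_i`, written with `i = j + 1`. -/
noncomputable def semiinvariantDerivation (R : Type*) [CommSemiring R] (n : ℕ)
    (S : MvPolynomial (Fin (n + 1)) R) : MvPolynomial (Fin (n + 1)) R :=
  ∑ j : Fin n, ((j : ℕ) + 1 : R) • (X j.castSucc * pderiv j.succ S)

theorem derivative_aeval_appell {R : Type*} [CommSemiring R] {n : ℕ} {A : ℕ → R[X]}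
    (hA0 : derivative (A 0) = 0) (hA : ∀ k : ℕ, derivative (A (k + 1)) = (k + 1) • A k)
    (S : MvPolynomial (Fin (n + 1)) R) :
    derivative (aeval (fun i : Fin (n + 1) => A i) S) =
      aeval (fun i : Fin (n + 1) => A i) (semiinvariantDerivation R n S) := by
  rw [derivative_aeval, Fin.sum_univ_succ, Fin.val_zero, hA0, mul_zero, zero_add,
    semiinvariantDerivation, map_sum]
  refine Finset.sum_congr rfl fun j _ => ?_
  rw [Fin.val_succ, hA, map_smul, map_mul, aeval_X, Fin.val_castSucc, ← Nat.cast_succ,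
    Nat.cast_smul_eq_nsmul, mul_smul_comm, mul_comm]

/-- If `S` is a semi-invariant, i.e. `D(S) = 0` for the derivation
`D(S) = ∑_{i=1}^{n} i·a_{i-1}·∂S/∂a_i`, then substituting an Appell sequence gives a
constant polynomial, namely the value of `S` at `(A 0 (0), …, A n (0))`. -/
theorem semiinvariant_gives_constant
    (n : ℕ) (A : ℕ → Polynomial ℚ)
    (hA0 : Polynomial.derivative (A 0) = 0)
    (hA : ∀ k : ℕ, Polynomial.derivative (A (k + 1)) = (k + 1) • A k)
    (S : MvPolynomial (Fin (n + 1)) ℚ)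
    (hS : (∑ j : Fin n, (((j : ℕ) + 1 : ℚ)) •
        (MvPolynomial.X j.castSucc * MvPolynomial.pderiv j.succ S)) = 0) :
    MvPolynomial.aeval (fun i : Fin (n + 1) => A i) S =
      Polynomial.C (MvPolynomial.eval (fun i : Fin (n + 1) => (A i).eval 0) S) := by
  have hderiv : derivative (aeval (fun i : Fin (n + 1) => A i) S) = 0 := by
    rw [derivative_aeval_appell hA0 hA, semiinvariantDerivation, hS, map_zero]
  rw [eq_C_of_derivative_eq_zero hderiv, coeff_zero_eq_eval_zero, eval_aeval]
end

section
/- Fix n : ℕ and let D : MvPolynomial (Fin (n+1)) ℚ → MvPolynomial (Fin (n+1)) ℚ be D(S) = ∑_{i=1}^{n} i · a_{i−1} · (∂S/∂a_i). Suppose S satisfies D(S) = 0 and S is weighted homogeneous of weight m with respect to the weight function w(a_i) = i (MvPolynomial.IsWeightedHomogeneous (fun i => (i:ℕ)) S m), with m > 0. Then S evaluated at a_0 = a_1 = ⋯ = a_n = 1 equals 0, i.e. MvPolynomial.eval (fun _ => (1:ℚ)) S = 0. -/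
/-! At `a = (1, …, 1)` the operator `D` takes the same value as the weighted Euler operator
`∑ i a_i ∂/∂a_i`, since `a_{i-1}` and `a_i` both evaluate to `1`; the Euler operator multiplies
an isobaric polynomial of weight `m` by `m`, so `m • S(1, …, 1) = D(S)(1, …, 1) = 0`. -/

namespace MvPolynomial

variable {R σ : Type*} [CommSemiring R] [Fintype σ] {φ : MvPolynomial σ R} {w : σ → ℕ} {m : ℕ}

theorem IsWeightedHomogeneous.sum_weight_smul_mul_eval_pderiv
    (h : φ.IsWeightedHomogeneous w m) (x : σ → R) :
    ∑ i, w i • (x i * eval x (pderiv i φ)) = m • eval x φ := by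
  simpa using congrArg (eval x) h.sum_weight_X_mul_pderiv

end MvPolynomial

open MvPolynomial in
/-- An isobaric (weighted homogeneous for the weight `w(a_i) = i`)
semi-invariant `S` of positive weight `m` vanishes at `a_0 = a_1 = ⋯ = a_n = 1`. -/
theorem semiinvariant_eval_one_eq_zero
    (n : ℕ) (S : MvPolynomial (Fin (n + 1)) ℚ) (m : ℕ)
    (hS : (∑ j : Fin n, (((j : ℕ) + 1 : ℚ)) •
        (MvPolynomial.X j.castSucc * MvPolynomial.pderiv j.succ S)) = 0)
    (hiso : MvPolynomial.IsWeightedHomogeneous (fun i : Fin (n + 1) => (i : ℕ)) S m)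
    (hm : 0 < m) :
    MvPolynomial.eval (fun _ : Fin (n + 1) => (1 : ℚ)) S = 0 := by
  have euler := hiso.sum_weight_smul_mul_eval_pderiv fun _ => 1
  rw [Fin.sum_univ_succ] at euler
  have raising := congrArg (eval fun _ => (1 : ℚ)) hS
  simp only [Fin.val_zero, zero_smul, zero_add, Fin.val_succ, nsmul_eq_mul, one_mul] at euler
  simp only [map_sum, smul_eval, eval_mul, eval_X, one_mul, map_zero] at raising
  push_cast at euler
  have : (m : ℚ) * eval (fun _ => 1) S = 0 := by rw [← euler, ← raising]
  exact (mul_eq_zero.mp this).resolve_left (by exact_mod_cast hm.ne')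
end

section
/- Fix n ≥ 1. On MvPolynomial (Fin (n+1)) ℚ define D(S) = ∑_{i=1}^{n} i · a_{i−1} · (∂S/∂a_i) and D*(S) = ∑_{i=0}^{n−1} (n−i) · a_{i+1} · (∂S/∂a_i). Let s ≠ 0 satisfy D(s) = 0, let s be homogeneous of degree d (MvPolynomial.IsHomogeneous s d) and weighted homogeneous of weight m with respect to w(a_i) = i. Then 2m ≤ n·d, and setting ω = n·d − 2m (the weight of s), the ω-th iterate (D*)^[ω](s) ≠ 0 while (D*)^[ω+1](s) = 0; that is, the order of the semi-invariant s equals its weight. -/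
/-!
The operators `D`, `D*` and `E = ∑ (n - 2i) a_i ∂/∂a_i` form an `sl₂`-triple acting on
`ℚ[a_0, …, a_n]`: `[D, D*] = E`, `[E, D] = 2D`, `[E, D*] = -2D*`, all read off from the
commutator of two polarization operators `a_j ∂/∂a_i`. By Euler's identity, a semi-invariant
of degree `d` and weight `m` is a primitive vector of eigenvalue `ω = nd - 2m`. Since `D*` keeps
the degree and raises the weight by one, while a nonzero form of degree `d` has weight at most
`nd`, the string `(D*)^k s` eventually vanishes. The `sl₂` identity
`D (D*)^(k+1) s = (k + 1)(ω - k) (D*)^k s` then forces `ω` to be the natural number at which the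
string stops.
-/

attribute [local instance] LieRing.ofAssociativeRing

theorem sum_smul_lie_sum_smul {ι κ R L : Type*} [CommRing R] [LieRing L] [LieAlgebra R L]
    (s : Finset ι) (t : Finset κ) (c : ι → R) (x : ι → L) (c' : κ → R) (y : κ → L) :
    ⁅∑ i ∈ s, c i • x i, ∑ j ∈ t, c' j • y j⁆ = ∑ i ∈ s, ∑ j ∈ t, (c i * c' j) • ⁅x i, y j⁆ := by
  simp only [sum_lie_sum, smul_lie, lie_smul, smul_smul, mul_comm]

open LieModule in
theorem IsSl2Triple.HasPrimitiveVectorWith.exists_nat_of_pow_toEnd_f_eq_zero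
    {R L M : Type*} [CommRing R] [LieRing L] [LieAlgebra R L] [AddCommGroup M] [Module R M]
    [LieRingModule L M] [LieModule R L M] [IsDomain R] [CharZero R] [Module.IsTorsionFree R M]
    {h e f : L} {t : IsSl2Triple h e f} {m : M} {μ : R}
    (P : t.HasPrimitiveVectorWith m μ) {N : ℕ} (hN : (toEnd R L M f ^ N) m = 0) :
    ∃ k : ℕ, μ = k ∧ (toEnd R L M f ^ k) m ≠ 0 ∧ (toEnd R L M f ^ (k + 1)) m = 0 := by
  obtain ⟨k, hk, hk'⟩ := Nat.exists_not_and_succ_of_not_zero_of_exists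
    (p := fun i => (toEnd R L M f ^ i) m = 0) (by simpa using P.ne_zero) ⟨N, hN⟩
  refine ⟨k, ?_, hk, hk'⟩
  have := P.lie_e_pow_succ_toEnd_f k
  rw [hk', lie_zero, eq_comm, smul_eq_zero_iff_left hk, mul_eq_zero, sub_eq_zero] at this
  exact this.resolve_left k.cast_add_one_ne_zero

namespace MvPolynomial

variable {σ R : Type*} [CommRing R]

theorem pderiv_pderiv_comm (i j : σ) (p : MvPolynomial σ R) :
    pderiv i (pderiv j p) = pderiv j (pderiv i p) := by
  have h : ⁅pderiv i, pderiv j⁆ = (0 : Derivation R (MvPolynomial σ R) (MvPolynomial σ R)) :=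
    derivation_ext fun k => by
      classical
      rw [Derivation.commutator_apply]
      simp [pderiv_X, Pi.single_apply, apply_ite]
  rw [← sub_eq_zero, ← Derivation.commutator_apply, h, Derivation.zero_apply]

variable (R) in
noncomputable def polarization (a b : σ) : Module.End R (MvPolynomial σ R) :=
  LinearMap.mulLeft R (X a) ∘ₗ (pderiv b).toLinearMap

@[simp]
theorem polarization_apply (a b : σ) (p : MvPolynomial σ R) :
    polarization R a b p = X a * pderiv b p := rfl

theorem lie_polarization [DecidableEq σ] (a b c d : σ) :
    ⁅polarization R a b, polarization R c d⁆ =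
      (if b = c then polarization R a d else 0) - if d = a then polarization R c b else 0 := by
  refine LinearMap.ext fun p => ?_
  simp only [LieRing.of_associative_ring_bracket, LinearMap.sub_apply, Module.End.mul_apply,
    polarization_apply, Derivation.leibniz, pderiv_X, pderiv_pderiv_comm b d]
  split_ifs <;> simp [*] <;> ring

theorem IsWeightedHomogeneous.polarization {w : σ → ℕ} {p : MvPolynomial σ R} {m c : ℕ}
    {a b : σ} (hp : p.IsWeightedHomogeneous w m) (hab : w a = w b + c) :
    (polarization R a b p).IsWeightedHomogeneous w (m + c) := by
  rcases le_or_gt (w b) m with hb | hb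
  · obtain ⟨m', rfl⟩ := exists_add_of_le hb
    convert (isWeightedHomogeneous_X R w a).mul (hp.pderiv (n' := m') (add_comm _ _)) using 1
    · rfl
    · omega
  · have : pderiv b p = 0 := by
      ext μ
      rw [coeff_pderiv, hp.coeff_eq_zero, zero_mul, coeff_zero]
      rw [map_add, Finsupp.weight_single, one_smul]
      omega
    simp [this, isWeightedHomogeneous_zero]

theorem eq_zero_of_isHomogeneous_of_isWeightedHomogeneous {w : σ → ℕ} {c d m : ℕ}
    {p : MvPolynomial σ R} (hw : ∀ i, w i ≤ c) (hd : p.IsHomogeneous d)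
    (hm : p.IsWeightedHomogeneous w m) (hlt : c * d < m) : p = 0 := by
  by_contra hp
  obtain ⟨μ, hμ⟩ := ne_zero_iff.mp hp
  have hle : Finsupp.weight w μ ≤ c * Finsupp.weight 1 μ := by
    simp only [Finsupp.weight_apply, Finsupp.sum, Finset.mul_sum, Pi.one_apply, smul_eq_mul,
      mul_one]
    exact Finset.sum_le_sum fun i _ => by rw [mul_comm c]; exact Nat.mul_le_mul_left _ (hw i)
  rw [hm hμ, hd hμ] at hle
  omega

end MvPolynomial

open MvPolynomial

namespace BinaryForm

variable (R : Type*) [CommRing R] (n : ℕ)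

noncomputable def D : Module.End R (MvPolynomial (Fin (n + 1)) R) :=
  ∑ j : Fin n, ((j : ℕ) + 1 : R) • polarization R j.castSucc j.succ

noncomputable def Dstar : Module.End R (MvPolynomial (Fin (n + 1)) R) :=
  ∑ j : Fin n, ((n : R) - (j : ℕ)) • polarization R j.succ j.castSucc

noncomputable def E : Module.End R (MvPolynomial (Fin (n + 1)) R) :=
  ∑ i : Fin (n + 1), ((n : R) - 2 * (i : ℕ)) • polarization R i i

-- Bilinearity is applied through `.trans`: the `SMul` on `Module.End` and the one coming from
-- its Lie algebra structure agree only up to unfolding, so `rw [smul_lie]` does not fire.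
theorem lie_E_D : ⁅E R n, D R n⁆ = 2 • D R n := by
  refine (sum_smul_lie_sum_smul _ _ _ _ _ _).trans ?_
  rw [Finset.sum_comm]
  simp only [lie_polarization, smul_sub, smul_ite, smul_zero, Finset.sum_sub_distrib,
    Finset.sum_ite_eq, Finset.sum_ite_eq', Finset.mem_univ, if_true, ← sub_smul, D,
    Finset.smul_sum]
  refine Finset.sum_congr rfl fun j _ => ?_
  simp only [Fin.val_castSucc, Fin.val_succ]
  push_cast
  module

theorem lie_E_Dstar : ⁅E R n, Dstar R n⁆ = -(2 • Dstar R n) := by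
  refine (sum_smul_lie_sum_smul _ _ _ _ _ _).trans ?_
  rw [Finset.sum_comm]
  simp only [lie_polarization, smul_sub, smul_ite, smul_zero, Finset.sum_sub_distrib,
    Finset.sum_ite_eq, Finset.sum_ite_eq', Finset.mem_univ, if_true, ← sub_smul, Dstar,
    Finset.smul_sum, ← Finset.sum_neg_distrib]
  refine Finset.sum_congr rfl fun j _ => ?_
  simp only [Fin.val_castSucc, Fin.val_succ]
  push_cast
  module

theorem lie_D_Dstar : ⁅D R n, Dstar R n⁆ = E R n := by
  refine (sum_smul_lie_sum_smul _ _ _ _ _ _).trans ?_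
  simp only [lie_polarization, smul_sub, smul_ite, smul_zero, Finset.sum_sub_distrib,
    Fin.succ_inj, Fin.castSucc_inj, Finset.sum_ite_eq, Finset.sum_ite_eq', Finset.mem_univ,
    if_true]
  have hE : E R n =
      ∑ i : Fin (n + 1), (((i : ℕ) + 1 : R) * (n - (i : ℕ))) • polarization R i i -
      ∑ i : Fin (n + 1), ((i : ℕ) * ((n : R) - (i : ℕ) + 1)) • polarization R i i := by
    rw [E, ← Finset.sum_sub_distrib]
    refine Finset.sum_congr rfl fun i _ => ?_
    module
  rw [hE, Fin.sum_univ_castSucc, Fin.sum_univ_succ (n := n)]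
  simp only [Fin.val_castSucc, Fin.val_last, sub_self, mul_zero, zero_smul, add_zero, Fin.val_zero,
    Nat.cast_zero, zero_mul, zero_add, Fin.val_succ, Nat.cast_add, Nat.cast_one]
  congr 1
  refine Finset.sum_congr rfl fun i _ => ?_
  module

variable {R n}

theorem E_apply_of_isHomogeneous {p : MvPolynomial (Fin (n + 1)) R} {d m : ℕ}
    (hd : p.IsHomogeneous d) (hm : p.IsWeightedHomogeneous (fun i : Fin (n + 1) => (i : ℕ)) m) :
    E R n p = ((n : R) * d - 2 * m) • p := by
  have hdeg := hd.sum_X_mul_pderiv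
  have hwt := hm.sum_weight_X_mul_pderiv
  simp only [← Nat.cast_smul_eq_nsmul R] at hdeg hwt
  calc E R n p
      = (n : R) • ∑ i, X i * pderiv i p -
          (2 : R) • ∑ i : Fin (n + 1), ((i : ℕ) : R) • (X i * pderiv i p) := by
        simp only [E, LinearMap.coe_sum, Finset.sum_apply, LinearMap.smul_apply,
          polarization_apply, Finset.smul_sum, ← Finset.sum_sub_distrib]
        refine Finset.sum_congr rfl fun i _ => ?_
        module
    _ = ((n : R) * d - 2 * m) • p := by
        rw [hdeg, hwt]
        module

variable (R n) in
theorem isSl2Triple [CharZero R] (hn : n ≠ 0) : IsSl2Triple (E R n) (D R n) (Dstar R n) where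
  h_ne_zero hE := by
    have h := E_apply_of_isHomogeneous (R := R) (isHomogeneous_X R (0 : Fin (n + 1)))
      (isWeightedHomogeneous_X R _ 0)
    rw [hE, LinearMap.zero_apply] at h
    simpa [hn] using congr(coeff (Finsupp.single 0 1) $h.symm)
  lie_e_f := lie_D_Dstar R n
  lie_h_e_nsmul := lie_E_D R n
  lie_h_f_nsmul := lie_E_Dstar R n

theorem isWeightedHomogeneous_Dstar {w : Fin (n + 1) → ℕ} {p : MvPolynomial (Fin (n + 1)) R}
    {m c : ℕ} (hw : ∀ j : Fin n, w j.succ = w j.castSucc + c) (hp : p.IsWeightedHomogeneous w m) :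
    (Dstar R n p).IsWeightedHomogeneous w (m + c) := by
  rw [← mem_weightedHomogeneousSubmodule]
  simp only [Dstar, LinearMap.coe_sum, Finset.sum_apply, LinearMap.smul_apply]
  exact Submodule.sum_mem _ fun j _ =>
    Submodule.smul_mem _ _ ((mem_weightedHomogeneousSubmodule _ _ _ _).mpr
      (hp.polarization (hw j)))

theorem Dstar_iterate_eq_zero {p : MvPolynomial (Fin (n + 1)) R} {d m : ℕ}
    (hd : p.IsHomogeneous d) (hm : p.IsWeightedHomogeneous (fun i : Fin (n + 1) => (i : ℕ)) m) :
    (Dstar R n)^[n * d + 1] p = 0 := by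
  have key : ∀ k, ((Dstar R n)^[k] p).IsHomogeneous d ∧
      ((Dstar R n)^[k] p).IsWeightedHomogeneous (fun i : Fin (n + 1) => (i : ℕ)) (m + k) := by
    intro k
    induction k with
    | zero => exact ⟨hd, hm⟩
    | succ k ih =>
      rw [Function.iterate_succ_apply']
      exact ⟨isWeightedHomogeneous_Dstar (c := 0) (fun _ => rfl) ih.1,
        isWeightedHomogeneous_Dstar (c := 1) (fun j => Fin.val_succ j) ih.2⟩
  exact eq_zero_of_isHomogeneous_of_isWeightedHomogeneous (fun i => Nat.lt_succ_iff.mp i.isLt)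
    (key _).1 (key _).2 (by omega)

end BinaryForm

/-- For a nonzero semi-invariant `s` (i.e. `D s = 0`) which is homogeneous
of degree `d` and weighted homogeneous of weight `m` for `w(a_i) = i`, one has
`2m ≤ n·d`, and, with `ω = n·d − 2m` the isobaric weight of `s`, the iterate
`(D*)^[ω] s` is nonzero while `(D*)^[ω+1] s = 0`: the order of `s` equals its weight. -/
theorem order_eq_weight
    (n : ℕ) (hn : 1 ≤ n) (s : MvPolynomial (Fin (n + 1)) ℚ) (d m : ℕ)
    (Dstar : MvPolynomial (Fin (n + 1)) ℚ → MvPolynomial (Fin (n + 1)) ℚ)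
    (hDstar : ∀ S, Dstar S = ∑ j : Fin n, ((n - (j : ℕ) : ℕ) : ℚ) •
        (MvPolynomial.X j.succ * MvPolynomial.pderiv j.castSucc S))
    (hs0 : s ≠ 0)
    (hsemi : (∑ j : Fin n, (((j : ℕ) + 1 : ℚ)) •
        (MvPolynomial.X j.castSucc * MvPolynomial.pderiv j.succ s)) = 0)
    (hhom : MvPolynomial.IsHomogeneous s d)
    (hiso : MvPolynomial.IsWeightedHomogeneous (fun i : Fin (n + 1) => (i : ℕ)) s m) :
    2 * m ≤ n * d ∧
      Dstar^[n * d - 2 * m] s ≠ 0 ∧ Dstar^[n * d - 2 * m + 1] s = 0 := by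
  obtain rfl : Dstar = BinaryForm.Dstar ℚ n := by
    funext S
    simp [hDstar, BinaryForm.Dstar, Nat.cast_sub]
  have P : (BinaryForm.isSl2Triple ℚ n (by omega)).HasPrimitiveVectorWith s
      ((n : ℚ) * d - 2 * m) :=
    ⟨hs0, BinaryForm.E_apply_of_isHomogeneous hhom hiso, by simpa [BinaryForm.D] using hsemi⟩
  obtain ⟨k, hk, hne, hzero⟩ := P.exists_nat_of_pow_toEnd_f_eq_zero (N := n * d + 1)
    (by simpa [Module.End.pow_apply] using BinaryForm.Dstar_iterate_eq_zero hhom hiso)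
  simp only [LieModule.toEnd_module_end, LieHom.id_apply, Module.End.pow_apply] at hne hzero
  have h2m : 2 * m ≤ n * d := by
    exact_mod_cast (by linarith [k.cast_nonneg (α := ℚ)] : (2 * m : ℚ) ≤ n * d)
  obtain rfl : k = n * d - 2 * m := by
    rw [← Nat.cast_inj (R := ℚ), ← hk]
    push_cast [h2m]
    ring
  exact ⟨h2m, hne, hzero⟩
end

section
/- Fix n ≥ 1 and let D, D* be the maps on MvPolynomial (Fin (n+1)) ℚ given by D(S) = ∑_{i=1}^{n} i·a_{i−1}·(∂S/∂a_i) and D*(S) = ∑_{i=0}^{n−1} (n−i)·a_{i+1}·(∂S/∂a_i). Let p be homogeneous of degree d_p and weighted homogeneous of weight m_p for w(a_i)=i with D(p)=0, and similarly q with d_q, m_q; set ω_p = n·d_p − 2m_p and ω_q = n·d_q − 2m_q (assume 2m_p ≤ n·d_p and 2m_q ≤ n·d_q), and let r ≤ min(ω_p, ω_q). Then the r-th semi-transvectant [p,q]^r := ∑_{i=0}^{r} (−1)^i · C(r,i) · ((D*)^[i](p) / [ω_p]_i) · ((D*)^[r−i](q) / [ω_q]_{r−i}) is homogeneous of degree d_p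 + d_q and weighted homogeneous of weight m_p + m_q + r for w(a_i)=i; equivalently, its isobaric weight is ω_p + ω_q − 2r. -/
/-!
Each term `a_{j+1} ∂/∂a_j` of `D*` trades one factor `a_j` of a monomial for `a_{j+1}`, so `D*`
preserves the degree and raises the weight by one. Hence `(D*)^[i] p` has degree `d_p` and weight
`m_p + i`, and every summand of `[p,q]^r` has degree `d_p + d_q` and weight
`(m_p + i) + (m_q + r - i) = m_p + m_q + r`.
-/

open MvPolynomial Finset

namespace MvPolynomial.IsWeightedHomogeneous

variable {R σ M : Type*} [CommSemiring R] {w : σ → M} {φ : MvPolynomial σ R}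

theorem X_mul_pderiv [AddCancelCommMonoid M] {m m' : M} {i j : σ}
    (hφ : φ.IsWeightedHomogeneous w m) (h : m + w j = m' + w i) :
    (X j * pderiv i φ).IsWeightedHomogeneous w m' := by
  classical
  induction hφ using IsWeightedHomogeneous.induction_on with
  | zero => simpa using isWeightedHomogeneous_zero R w m'
  | add p q _ _ hp hq => simpa [mul_add] using hp.add hq
  | monomial d r hd =>
    rw [pderiv_monomial]
    by_cases hi : d i = 0
    · simpa [hi] using isWeightedHomogeneous_zero R w m'
    · rw [X, monomial_mul]
      apply isWeightedHomogeneous_monomial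
      rw [← add_right_cancel_iff (a := w i), ← h, ← hd, ← Finsupp.weight_sub_single_add hi, map_add,
        Finsupp.weight_single, one_smul]
      abel

theorem sum_smul_X_mul_pderiv [AddCancelCommMonoid M] {ι : Type*} {m m' : M}
    (hφ : φ.IsWeightedHomogeneous w m) (s : Finset ι) (c : ι → R) {t u : ι → σ}
    (h : ∀ k ∈ s, m + w (t k) = m' + w (u k)) :
    (∑ k ∈ s, c k • (X (t k) * pderiv (u k) φ)).IsWeightedHomogeneous w m' :=
  IsWeightedHomogeneous.sum _ _ _ fun k hk => by
    simpa only [smul_eq_C_mul] using (hφ.X_mul_pderiv (h k hk)).C_mul (c k)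

theorem iterate [AddCommMonoid M] {E : MvPolynomial σ R → MvPolynomial σ R} {δ : M}
    (hE : ∀ {m : M} {ψ : MvPolynomial σ R}, ψ.IsWeightedHomogeneous w m →
      (E ψ).IsWeightedHomogeneous w (m + δ))
    {m : M} (hφ : φ.IsWeightedHomogeneous w m) (k : ℕ) :
    (E^[k] φ).IsWeightedHomogeneous w (m + k • δ) := by
  induction k with
  | zero => simpa using hφ
  | succ k ih =>
    rw [Function.iterate_succ_apply', succ_nsmul, ← add_assoc]
    exact hE ih

theorem sum_smul_iterate_mul_iterate [AddCommMonoid M]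
    {E : MvPolynomial σ R → MvPolynomial σ R} {δ : M}
    (hE : ∀ {m : M} {ψ : MvPolynomial σ R}, ψ.IsWeightedHomogeneous w m →
      (E ψ).IsWeightedHomogeneous w (m + δ))
    {ψ : MvPolynomial σ R} {m m' : M} (hφ : φ.IsWeightedHomogeneous w m)
    (hψ : ψ.IsWeightedHomogeneous w m') (c : ℕ → R) (r : ℕ) :
    (∑ i ∈ range (r + 1), c i • (E^[i] φ * E^[r - i] ψ)).IsWeightedHomogeneous w
      (m + m' + r • δ) :=
  IsWeightedHomogeneous.sum _ _ _ fun i hi => by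
    have hir : i + (r - i) = r := Nat.add_sub_of_le (Nat.lt_succ_iff.mp (mem_range.mp hi))
    have hprod := (hφ.iterate hE i).mul (hψ.iterate hE (r - i))
    rw [add_add_add_comm, ← add_nsmul, hir] at hprod
    simpa only [smul_eq_C_mul] using hprod.C_mul (c i)

end MvPolynomial.IsWeightedHomogeneous

theorem semi_transvectant_homogeneous_general
    (n : ℕ)
    (Dstar : MvPolynomial (Fin (n + 1)) ℚ → MvPolynomial (Fin (n + 1)) ℚ)
    (hDstar : ∀ S, Dstar S = ∑ j : Fin n, ((n - (j : ℕ) : ℕ) : ℚ) •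
        (MvPolynomial.X j.succ * MvPolynomial.pderiv j.castSucc S))
    (p q : MvPolynomial (Fin (n + 1)) ℚ) (dp mp dq mq r : ℕ)
    (hphom : MvPolynomial.IsHomogeneous p dp)
    (hpiso : MvPolynomial.IsWeightedHomogeneous (fun i : Fin (n + 1) => (i : ℕ)) p mp)
    (hqhom : MvPolynomial.IsHomogeneous q dq)
    (hqiso : MvPolynomial.IsWeightedHomogeneous (fun i : Fin (n + 1) => (i : ℕ)) q mq) :
    MvPolynomial.IsHomogeneous
      (∑ i ∈ Finset.range (r + 1),
        (((-1 : ℚ) ^ i * (r.choose i)) /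
            ((Nat.descFactorial (n * dp - 2 * mp) i : ℚ) *
              (Nat.descFactorial (n * dq - 2 * mq) (r - i) : ℚ))) •
          (Dstar^[i] p * Dstar^[r - i] q)) (dp + dq) ∧
    MvPolynomial.IsWeightedHomogeneous (fun i : Fin (n + 1) => (i : ℕ))
      (∑ i ∈ Finset.range (r + 1),
        (((-1 : ℚ) ^ i * (r.choose i)) /
            ((Nat.descFactorial (n * dp - 2 * mp) i : ℚ) *
              (Nat.descFactorial (n * dq - 2 * mq) (r - i) : ℚ))) •
          (Dstar^[i] p * Dstar^[r - i] q)) (mp + mq + r) := by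
  -- `+ 0` matches the shift `δ = 0`; the resulting `dp + dq + r • 0` is defeq to `dp + dq`.
  have degree_preserved {m : ℕ} {S : MvPolynomial (Fin (n + 1)) ℚ} (hS : S.IsHomogeneous m) :
      (Dstar S).IsHomogeneous (m + 0) :=
    hDstar S ▸ hS.sum_smul_X_mul_pderiv _ _ fun _ _ => rfl
  have weight_raised {m : ℕ} {S : MvPolynomial (Fin (n + 1)) ℚ}
      (hS : S.IsWeightedHomogeneous (fun i : Fin (n + 1) => (i : ℕ)) m) :
      (Dstar S).IsWeightedHomogeneous (fun i : Fin (n + 1) => (i : ℕ)) (m + 1) :=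
    hDstar S ▸ hS.sum_smul_X_mul_pderiv _ _ fun j _ => by
      rw [Fin.val_succ, Fin.val_castSucc]; omega
  rw [show mp + mq + r = mp + mq + r • 1 by simp]
  exact ⟨hphom.sum_smul_iterate_mul_iterate degree_preserved hqhom _ r,
    hpiso.sum_smul_iterate_mul_iterate weight_raised hqiso _ r⟩

/-- The `r`-th semi-transvectant
`[p,q]^r = ∑_{i=0}^{r} (−1)^i C(r,i) ((D*)^[i] p / [ω_p]_i) ((D*)^[r−i] q / [ω_q]_{r−i})`
of semi-invariants `p, q` (homogeneous of degrees `d_p, d_q` and weighted homogeneous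
of weights `m_p, m_q` for `w(a_i) = i`, with isobaric weights `ω_p = n·d_p − 2m_p`,
`ω_q = n·d_q − 2m_q` and `r ≤ min(ω_p, ω_q)`) is homogeneous of degree `d_p + d_q` and
weighted homogeneous of weight `m_p + m_q + r`; i.e. its isobaric weight is
`ω_p + ω_q − 2r`. -/
theorem semi_transvectant_homogeneous
    (n : ℕ) (hn : 1 ≤ n)
    (Dstar : MvPolynomial (Fin (n + 1)) ℚ → MvPolynomial (Fin (n + 1)) ℚ)
    (hDstar : ∀ S, Dstar S = ∑ j : Fin n, ((n - (j : ℕ) : ℕ) : ℚ) •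
        (MvPolynomial.X j.succ * MvPolynomial.pderiv j.castSucc S))
    (p q : MvPolynomial (Fin (n + 1)) ℚ) (dp mp dq mq r : ℕ)
    (hpsemi : (∑ j : Fin n, (((j : ℕ) + 1 : ℚ)) •
        (MvPolynomial.X j.castSucc * MvPolynomial.pderiv j.succ p)) = 0)
    (hqsemi : (∑ j : Fin n, (((j : ℕ) + 1 : ℚ)) •
        (MvPolynomial.X j.castSucc * MvPolynomial.pderiv j.succ q)) = 0)
    (hphom : MvPolynomial.IsHomogeneous p dp)
    (hpiso : MvPolynomial.IsWeightedHomogeneous (fun i : Fin (n + 1) => (i : ℕ)) p mp)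
    (hqhom : MvPolynomial.IsHomogeneous q dq)
    (hqiso : MvPolynomial.IsWeightedHomogeneous (fun i : Fin (n + 1) => (i : ℕ)) q mq)
    (hmp : 2 * mp ≤ n * dp) (hmq : 2 * mq ≤ n * dq)
    (hr : r ≤ min (n * dp - 2 * mp) (n * dq - 2 * mq)) :
    MvPolynomial.IsHomogeneous
      (∑ i ∈ Finset.range (r + 1),
        (((-1 : ℚ) ^ i * (r.choose i)) /
            ((Nat.descFactorial (n * dp - 2 * mp) i : ℚ) *
              (Nat.descFactorial (n * dq - 2 * mq) (r - i) : ℚ))) •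
          (Dstar^[i] p * Dstar^[r - i] q)) (dp + dq) ∧
    MvPolynomial.IsWeightedHomogeneous (fun i : Fin (n + 1) => (i : ℕ))
      (∑ i ∈ Finset.range (r + 1),
        (((-1 : ℚ) ^ i * (r.choose i)) /
            ((Nat.descFactorial (n * dp - 2 * mp) i : ℚ) *
              (Nat.descFactorial (n * dq - 2 * mq) (r - i) : ℚ))) •
          (Dstar^[i] p * Dstar^[r - i] q)) (mp + mq + r) :=
  semi_transvectant_homogeneous_general n Dstar hDstar p q dp mp dq mq r hphom hpiso hqhom hqiso
end

section
/- Let A : ℕ → ℚ[X] be an Appell sequence. Then for every n, the polynomial Dv_n(A) := ∑_{i=0}^{n} (−1)^i · C(n,i) · (A i) · (A (n−i)) ∈ ℚ[X] is constant; explicitly, ∑_{i=0}^{n} (−1)^i · C(n,i) · (A i) · (A (n−i)) = Polynomial.C ( ∑_{i=0}^{n} (−1)^i · C(n,i) · (A i).eval 0 · (A (n−i)).eval 0 ). -/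
/-!
By the product rule and `A (i + 1)' = (i + 1) A i`, the derivative of `Dv_{n+1}` splits into two
sums, which the identities `(i + 1) C(n+1, i+1) = (n + 1) C(n, i) = (n + 1 - i) C(n+1, i)` turn
into `-(n + 1) Dv_n` and `(n + 1) Dv_n`. So every `Dv_n` has zero derivative, and over a
torsion-free ring it is the constant `Dv_n(0)`.
-/

open Polynomial Finset

namespace Polynomial

variable {R : Type*} [CommRing R]

noncomputable def alternatingConvolution (A : ℕ → R[X]) (n : ℕ) : R[X] :=
  ∑ i ∈ range (n + 1), ((-1 : R) ^ i * n.choose i) • (A i * A (n - i))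

lemma eval_alternatingConvolution (A : ℕ → R[X]) (n : ℕ) (x : R) :
    (alternatingConvolution A n).eval x =
      ∑ i ∈ range (n + 1), (-1 : R) ^ i * n.choose i * (A i).eval x * (A (n - i)).eval x := by
  simp only [alternatingConvolution, eval_finsetSum, eval_smul, eval_mul, smul_eq_mul, mul_assoc]

variable {A : ℕ → R[X]}

lemma sum_derivative_mul_eq_neg_alternatingConvolution (hA0 : derivative (A 0) = 0)
    (hA : ∀ k : ℕ, derivative (A (k + 1)) = (k + 1) • A k) (n : ℕ) :
    ∑ i ∈ range (n + 2),
        ((-1 : R) ^ i * (n + 1).choose i) • (derivative (A i) * A (n + 1 - i)) =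
      -((n + 1) • alternatingConvolution A n) := by
  rw [sum_range_succ', hA0, zero_mul, smul_zero, add_zero, alternatingConvolution, smul_sum,
    ← sum_neg_distrib]
  refine sum_congr rfl fun i _ => ?_
  have hchoose := congrArg (Nat.cast : ℕ → R) (Nat.add_one_mul_choose_eq n i)
  push_cast at hchoose
  rw [hA, Nat.add_sub_add_right, smul_mul_assoc, ← Nat.cast_smul_eq_nsmul R,
    ← Nat.cast_smul_eq_nsmul R, smul_smul, smul_smul, ← neg_smul]
  congr 1
  push_cast
  linear_combination (-1 : R) ^ i * hchoose

lemma sum_mul_derivative_eq_alternatingConvolution (hA0 : derivative (A 0) = 0)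
    (hA : ∀ k : ℕ, derivative (A (k + 1)) = (k + 1) • A k) (n : ℕ) :
    ∑ i ∈ range (n + 2),
        ((-1 : R) ^ i * (n + 1).choose i) • (A i * derivative (A (n + 1 - i))) =
      (n + 1) • alternatingConvolution A n := by
  rw [sum_range_succ, Nat.sub_self, hA0, mul_zero, smul_zero, add_zero, alternatingConvolution,
    smul_sum]
  refine sum_congr rfl fun i hi => ?_
  replace hi : i ≤ n := Nat.lt_succ_iff.mp (mem_range.mp hi)
  have hchoose := congrArg (Nat.cast : ℕ → R) (Nat.choose_mul_succ_eq n i)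
  rw [Nat.succ_sub hi] at hchoose
  push_cast at hchoose
  rw [Nat.succ_sub hi, hA, mul_smul_comm, ← Nat.cast_smul_eq_nsmul R,
    ← Nat.cast_smul_eq_nsmul R, smul_smul, smul_smul]
  congr 1
  push_cast
  linear_combination (-(-1 : R) ^ i) * hchoose

theorem derivative_alternatingConvolution (hA0 : derivative (A 0) = 0)
    (hA : ∀ k : ℕ, derivative (A (k + 1)) = (k + 1) • A k) (n : ℕ) :
    derivative (alternatingConvolution A n) = 0 := by
  cases n with
  | zero => simp [alternatingConvolution, hA0]
  | succ n =>
    simp only [alternatingConvolution, derivative_sum, derivative_smul, derivative_mul, smul_add,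
      sum_add_distrib, sum_derivative_mul_eq_neg_alternatingConvolution hA0 hA,
      sum_mul_derivative_eq_alternatingConvolution hA0 hA, neg_add_cancel]

theorem alternatingConvolution_eq_C [IsAddTorsionFree R] (hA0 : derivative (A 0) = 0)
    (hA : ∀ k : ℕ, derivative (A (k + 1)) = (k + 1) • A k) (n : ℕ) :
    alternatingConvolution A n = C ((alternatingConvolution A n).eval 0) := by
  rw [← coeff_zero_eq_eval_zero]
  exact eq_C_of_derivative_eq_zero (derivative_alternatingConvolution hA0 hA n)

end Polynomial

/-- For an Appell sequence `A`, the alternating binomial convolution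
`Dv_n(A) = ∑_{i=0}^{n} (−1)^i C(n,i) A_i(x) A_{n−i}(x)` is constant, equal to its
value at `0`. -/
theorem Dv_constant
    (A : ℕ → Polynomial ℚ)
    (hA0 : Polynomial.derivative (A 0) = 0)
    (hA : ∀ k : ℕ, Polynomial.derivative (A (k + 1)) = (k + 1) • A k)
    (n : ℕ) :
    (∑ i ∈ Finset.range (n + 1), ((-1 : ℚ) ^ i * (n.choose i)) • (A i * A (n - i))) =
      Polynomial.C (∑ i ∈ Finset.range (n + 1),
        (-1 : ℚ) ^ i * (n.choose i) * (A i).eval 0 * (A (n - i)).eval 0) := by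
  rw [← eval_alternatingConvolution]
  exact alternatingConvolution_eq_C hA0 hA n
end

section
/- Let A : ℕ → ℚ[X] be an Appell sequence and let n ≥ 4. Then the polynomial Tr_n(A) := ∑_{i=0}^{n} ∑_{j=0}^{i} ((−1)^i / [2n−4]_i) · C(n,i) · C(i,j) · (A (n−i)) · ( [n]_j·(A j) · [n−2]_{i−j}·(A (i−j+2)) − [n−1]_{i−j}·(A (i−j+1)) · [n−1]_j·(A (j+1)) ) ∈ ℚ[X] is constant, i.e. it equals Polynomial.C of its value at 0. -/
open Polynomial Finset
open scoped Nat

/-!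
With `E p = C(n,p) A_p` and `F i = [n]_i A_{n-i}`, the Appell property reads
`E'_{p+1} = (n-p) E_p` and `F'_i = F_{i+1}`. Symmetrising the two products in `Tr_n(A)` gives
`2n²(n-1) Tr_n(A) = ∑ᵢ cᵢ F_i Q_{i+2}`, where `cᵢ = (-1)^i/[2n-4]_i` and
`Q_m = ∑_{p+q=m} w(p,q) E_p E_q` with `w(p,q) = n(p(p-1)+q(q-1)) - 2(n-1)pq`.
This weight satisfies `(n-p) w(p+1,q) + (n-q) w(p,q+1) = (2n-2-p-q) w(p,q)`, so
`Q'_{m+1} = (2n-2-m) Q_m`. As `c_{i+1} (2n-4-i) = -c_i` for every `i < 2n-4`, in particular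
for every `i < n` when `n ≥ 4`, the derivative of the sum telescopes to `c_n F_{n+1} Q_{n+2} = 0`.
-/

theorem Nat.descFactorial_succ_eq_mul_pred (n k : ℕ) :
    n.descFactorial (k + 1) = n * (n - 1).descFactorial k := by
  cases n with
  | zero => simp
  | succ n => rw [Nat.succ_descFactorial_succ, Nat.add_sub_cancel]

theorem Nat.choose_add_mul_choose_mul_factorial_mul_factorial (n j k : ℕ) :
    n.choose (j + k) * (j + k).choose j * j ! * k ! = n.descFactorial (j + k) := by
  rw [Nat.descFactorial_eq_factorial_mul_choose, add_comm j k,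
    ← Nat.add_choose_mul_factorial_mul_factorial k j]
  ring

theorem Nat.choose_mul_descFactorial_mul_descFactorial_sub_two (n j k : ℕ) :
    n.choose (j + k) * (j + k).choose j * n.descFactorial j * (n - 2).descFactorial k *
        (n * (n - 1)) =
      n.descFactorial (j + k) * n.choose j * (n.choose (k + 2) * ((k + 2) * (k + 1))) := by
  apply Nat.eq_of_mul_eq_mul_right (Nat.mul_pos j.factorial_pos k.factorial_pos)
  calc _ = n.choose (j + k) * (j + k).choose j * j ! * k ! * n.descFactorial j *
        ((n - 2).descFactorial k * (n * (n - 1))) := by ring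
    _ = n.descFactorial (j + k) * n.descFactorial j * n.descFactorial (k + 2) := by
      rw [Nat.choose_add_mul_choose_mul_factorial_mul_factorial, Nat.descFactorial_succ_eq_mul_pred,
        Nat.descFactorial_succ_eq_mul_pred, Nat.sub_sub]
      ring
    _ = _ := by
      rw [Nat.descFactorial_eq_factorial_mul_choose n j,
        Nat.descFactorial_eq_factorial_mul_choose n (k + 2), Nat.factorial_succ, Nat.factorial_succ]
      ring

theorem Nat.choose_mul_descFactorial_sub_one_mul_descFactorial_sub_one (n j k : ℕ) :
    n.choose (j + k) * (j + k).choose j * (n - 1).descFactorial k * (n - 1).descFactorial j *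
        (n * n) =
      n.descFactorial (j + k) * (n.choose (j + 1) * (j + 1)) * (n.choose (k + 1) * (k + 1)) := by
  apply Nat.eq_of_mul_eq_mul_right (Nat.mul_pos j.factorial_pos k.factorial_pos)
  calc _ = n.choose (j + k) * (j + k).choose j * j ! * k ! * (n * (n - 1).descFactorial j) *
        (n * (n - 1).descFactorial k) := by ring
    _ = n.descFactorial (j + k) * n.descFactorial (j + 1) * n.descFactorial (k + 1) := by
      rw [Nat.choose_add_mul_choose_mul_factorial_mul_factorial, Nat.descFactorial_succ_eq_mul_pred,
        Nat.descFactorial_succ_eq_mul_pred]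
    _ = _ := by
      rw [Nat.descFactorial_eq_factorial_mul_choose n (j + 1),
        Nat.descFactorial_eq_factorial_mul_choose n (k + 1), Nat.factorial_succ, Nat.factorial_succ]
      ring

section Appell

variable {R : Type*} [Semiring R] {A : ℕ → R[X]}

theorem derivative_appell (hA0 : derivative (A 0) = 0)
    (hA : ∀ k : ℕ, derivative (A (k + 1)) = (k + 1) • A k) (k : ℕ) :
    derivative (A k) = k • A (k - 1) := by
  cases k with
  | zero => simpa using hA0
  | succ k => simpa using hA k

theorem derivative_descFactorial_smul_appell (hA0 : derivative (A 0) = 0)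
    (hA : ∀ k : ℕ, derivative (A (k + 1)) = (k + 1) • A k) (n i : ℕ) :
    derivative ((n.descFactorial i : R) • A (n - i)) =
      (n.descFactorial (i + 1) : R) • A (n - (i + 1)) := by
  rw [derivative_smul, derivative_appell hA0 hA, ← Nat.cast_smul_eq_nsmul R, smul_smul,
    Nat.descFactorial_succ, mul_comm (n - i), Nat.cast_mul, Nat.sub_sub]

end Appell

theorem derivative_choose_smul_appell {R : Type*} [Ring R] {A : ℕ → R[X]}
    (hA : ∀ k : ℕ, derivative (A (k + 1)) = (k + 1) • A k) (n p : ℕ) :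
    derivative ((n.choose (p + 1) : R) • A (p + 1)) =
      ((n : R) - p) • (n.choose p : R) • A p := by
  rcases le_or_gt p n with hp | hp
  · rw [derivative_smul, hA, ← Nat.cast_smul_eq_nsmul R, smul_smul, smul_smul,
      ← Nat.cast_sub hp, ← Nat.cast_mul, ← Nat.cast_mul, mul_comm (n - p),
      ← Nat.choose_succ_right_eq]
  · simp [Nat.choose_eq_zero_of_lt hp, Nat.choose_eq_zero_of_lt (hp.trans (Nat.lt_succ_self p))]

section QuadForm

variable {R : Type*} [CommRing R]

def quadWeight (a : R) (p q : ℕ) : R :=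
  a * (p * (p - 1) + q * (q - 1)) - 2 * (a - 1) * p * q

noncomputable def quadForm (a : R) (E : ℕ → R[X]) (m : ℕ) : R[X] :=
  ∑ x ∈ antidiagonal m, quadWeight a x.1 x.2 • (E x.1 * E x.2)

theorem quadForm_one (a : R) (E : ℕ → R[X]) : quadForm a E 1 = 0 := by
  simp [quadForm, quadWeight, Nat.sum_antidiagonal_succ]

theorem derivative_quadForm {a : R} {E : ℕ → R[X]} (hE0 : derivative (E 0) = 0)
    (hE : ∀ p : ℕ, derivative (E (p + 1)) = (a - p) • E p) (m : ℕ) :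
    derivative (quadForm a E (m + 1)) = (2 * a - 2 - m) • quadForm a E m := by
  have h₁ :
      ∑ x ∈ antidiagonal (m + 1), quadWeight a x.1 x.2 • (derivative (E x.1) * E x.2) =
      ∑ x ∈ antidiagonal m, quadWeight a (x.1 + 1) x.2 • ((a - x.1) • (E x.1 * E x.2)) := by
    simp [Nat.sum_antidiagonal_succ, hE0, hE]
  have h₂ :
      ∑ x ∈ antidiagonal (m + 1), quadWeight a x.1 x.2 • (E x.1 * derivative (E x.2)) =
      ∑ x ∈ antidiagonal m, quadWeight a x.1 (x.2 + 1) • ((a - x.2) • (E x.1 * E x.2)) := by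
    simp [Nat.sum_antidiagonal_succ', hE0, hE]
  simp only [quadForm, derivative_sum, derivative_smul, derivative_mul, smul_add,
    sum_add_distrib, h₁, h₂, smul_sum, smul_smul]
  rw [← sum_add_distrib]
  refine sum_congr rfl fun x hx => ?_
  rw [← add_smul, ← mem_antidiagonal.mp hx]
  congr 1
  simp only [quadWeight]
  push_cast
  ring

theorem quadForm_add_two (a : R) (E : ℕ → R[X]) (i : ℕ) :
    quadForm a E (i + 2) = ∑ x ∈ antidiagonal i,
      ((2 * a * (x.2 + 2) * (x.2 + 1)) • (E x.1 * E (x.2 + 2)) -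
        (2 * (a - 1) * (x.1 + 1) * (x.2 + 1)) • (E (x.1 + 1) * E (x.2 + 1))) := by
  have hswap : ∑ x ∈ antidiagonal (i + 2), (a * (x.1 * (x.1 - 1))) • (E x.1 * E x.2) =
      ∑ x ∈ antidiagonal (i + 2), (a * (x.2 * (x.2 - 1))) • (E x.1 * E x.2) := by
    rw [← Nat.sum_antidiagonal_swap]
    refine sum_congr rfl fun x _ => ?_
    rw [Prod.fst_swap, Prod.snd_swap, mul_comm (E x.2)]
  have hfirst : ∑ x ∈ antidiagonal (i + 2), (a * (x.2 * (x.2 - 1))) • (E x.1 * E x.2) =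
      ∑ x ∈ antidiagonal i, (a * (x.2 + 2) * (x.2 + 1)) • (E x.1 * E (x.2 + 2)) := by
    rw [Nat.sum_antidiagonal_succ', Nat.sum_antidiagonal_succ']
    simp only [Nat.cast_zero, Nat.cast_one, zero_mul, mul_zero, sub_self, zero_smul, zero_add]
    refine sum_congr rfl fun x _ => ?_
    push_cast
    ring_nf
  have hsecond : ∑ x ∈ antidiagonal (i + 2), (2 * (a - 1) * x.1 * x.2) • (E x.1 * E x.2) =
      ∑ x ∈ antidiagonal i,
        (2 * (a - 1) * (x.1 + 1) * (x.2 + 1)) • (E (x.1 + 1) * E (x.2 + 1)) := by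
    rw [Nat.sum_antidiagonal_succ, Nat.sum_antidiagonal_succ']
    simp
  have hsplit : quadForm a E (i + 2) =
      ∑ x ∈ antidiagonal (i + 2), (a * (x.1 * (x.1 - 1))) • (E x.1 * E x.2) +
        ∑ x ∈ antidiagonal (i + 2), (a * (x.2 * (x.2 - 1))) • (E x.1 * E x.2) -
        ∑ x ∈ antidiagonal (i + 2), (2 * (a - 1) * x.1 * x.2) • (E x.1 * E x.2) := by
    rw [quadForm, ← sum_add_distrib, ← sum_sub_distrib]
    refine sum_congr rfl fun x _ => ?_
    rw [← add_smul, ← sub_smul, quadWeight]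
    ring_nf
  rw [hsplit, hswap, hfirst, hsecond, ← sum_add_distrib, ← sum_sub_distrib]
  refine sum_congr rfl fun x _ => ?_
  module

end QuadForm

section Tr

variable {R : Type*} [CommRing R]

/-- `Tr_n(A)` with `c i` in place of `(-1)^i / [2n-4]_i`. -/
noncomputable def trSum (A : ℕ → R[X]) (c : ℕ → R) (n : ℕ) : R[X] :=
  ∑ i ∈ range (n + 1), ∑ j ∈ range (i + 1), (c i * n.choose i * i.choose j) •
    (A (n - i) *
      ((n.descFactorial j : R) • A j * ((n - 2).descFactorial (i - j) : R) • A (i - j + 2) -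
        ((n - 1).descFactorial (i - j) : R) • A (i - j + 1) *
          ((n - 1).descFactorial j : R) • A (j + 1)))

theorem smul_trSum_summand (A : ℕ → R[X]) {n : ℕ} (hn : 1 ≤ n) (j k : ℕ) :
    (2 * n ^ 2 * (n - 1) : R) • ((n.choose (j + k) * (j + k).choose j : R) •
      (A (n - (j + k)) *
        ((n.descFactorial j : R) • A j * ((n - 2).descFactorial k : R) • A (k + 2) -
          ((n - 1).descFactorial k : R) • A (k + 1) *
            ((n - 1).descFactorial j : R) • A (j + 1)))) =
    (n.descFactorial (j + k) : R) • A (n - (j + k)) *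
      ((2 * n * (k + 2) * (k + 1) : R) •
          ((n.choose j : R) • A j * (n.choose (k + 2) : R) • A (k + 2)) -
        (2 * (n - 1) * (j + 1) * (k + 1) : R) •
          ((n.choose (j + 1) : R) • A (j + 1) * (n.choose (k + 1) : R) • A (k + 1))) := by
  have h₁ := congrArg (Nat.cast : ℕ → R)
    (Nat.choose_mul_descFactorial_mul_descFactorial_sub_two n j k)
  have h₂ := congrArg (Nat.cast : ℕ → R)
    (Nat.choose_mul_descFactorial_sub_one_mul_descFactorial_sub_one n j k)
  push_cast [Nat.cast_sub hn] at h₁ h₂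
  simp only [smul_mul_assoc, mul_smul_comm, smul_smul, smul_sub, mul_sub, mul_comm (A (k + 1))]
  congr 2
  · linear_combination (2 * n : R) * h₁
  · linear_combination (2 * (n - 1) : R) * h₂

theorem smul_trSum_eq (A : ℕ → R[X]) (c : ℕ → R) {n : ℕ} (hn : 1 ≤ n) :
    (2 * n ^ 2 * (n - 1) : R) • trSum A c n =
      ∑ i ∈ range (n + 1), c i • ((n.descFactorial i : R) • A (n - i) *
        quadForm (n : R) (fun p => (n.choose p : R) • A p) (i + 2)) := by
  rw [trSum, smul_sum]
  refine sum_congr rfl fun i _ => ?_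
  rw [quadForm_add_two, mul_sum, smul_sum, smul_sum, Nat.sum_antidiagonal_eq_sum_range_succ_mk]
  refine sum_congr rfl fun j hj => ?_
  obtain ⟨k, rfl⟩ := Nat.exists_eq_add_of_le (mem_range_succ_iff.mp hj)
  dsimp only
  rw [Nat.add_sub_cancel_left, ← smul_trSum_summand A hn j k, smul_comm (c (j + k)),
    smul_smul (c (j + k)), mul_assoc (c (j + k))]

theorem derivative_sum_range_smul_mul_telescope {c : ℕ → R} {F Q : ℕ → R[X]}
    (hF : ∀ i, derivative (F i) = F (i + 1)) (hQ2 : derivative (Q 2) = 0) (N : ℕ)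
    (hc : ∀ i < N, c (i + 1) • derivative (Q (i + 3)) = -(c i • Q (i + 2))) :
    derivative (∑ i ∈ range (N + 1), c i • (F i * Q (i + 2))) =
      c N • (F (N + 1) * Q (N + 2)) := by
  induction N with
  | zero => simp [derivative_mul, hF, hQ2]
  | succ N ih =>
    rw [sum_range_succ, derivative_add, ih fun i hi => hc i (by omega), derivative_smul,
      derivative_mul, hF, smul_add, ← mul_smul_comm (c (N + 1)) (F (N + 1)),
      show N + 1 + 2 = N + 3 from rfl, hc N (by omega), mul_neg, mul_smul_comm]
    abel

end Tr

theorem neg_one_pow_div_descFactorial_succ_mul {K : Type*} [Field K] [CharZero K] {e i : ℕ}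
    (hi : i < e) :
    (-1) ^ (i + 1) / (e.descFactorial (i + 1) : K) * ((e : K) - i) =
      -((-1) ^ i / (e.descFactorial i : K)) := by
  have he : (e : K) - i ≠ 0 := sub_ne_zero.mpr (by exact_mod_cast hi.ne')
  rw [Nat.descFactorial_succ, Nat.cast_mul, Nat.cast_sub hi.le]
  field_simp
  ring

/-- For an Appell sequence `A` and `n ≥ 4`, the polynomial
`Tr_n(A) = ∑_{i=0}^{n} ∑_{j=0}^{i} ((−1)^i/[2n−4]_i) C(n,i) C(i,j) A_{n−i}
  ([n]_j A_j [n−2]_{i−j} A_{i−j+2} − [n−1]_{i−j} A_{i−j+1} [n−1]_j A_{j+1})`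
is constant, equal to `C` of its value at `0`. -/
theorem Tr_constant
    (A : ℕ → Polynomial ℚ)
    (hA0 : Polynomial.derivative (A 0) = 0)
    (hA : ∀ k : ℕ, Polynomial.derivative (A (k + 1)) = (k + 1) • A k)
    (n : ℕ) (hn : 4 ≤ n)
    (T : Polynomial ℚ)
    (hT : T = ∑ i ∈ Finset.range (n + 1), ∑ j ∈ Finset.range (i + 1),
        (((-1 : ℚ) ^ i / (Nat.descFactorial (2 * n - 4) i : ℚ)) *
            (n.choose i) * (i.choose j)) •
          (A (n - i) *
            ((Nat.descFactorial n j : ℚ) • A j *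
                ((Nat.descFactorial (n - 2) (i - j) : ℚ) • A (i - j + 2)) -
              (Nat.descFactorial (n - 1) (i - j) : ℚ) • A (i - j + 1) *
                ((Nat.descFactorial (n - 1) j : ℚ) • A (j + 1))))) :
    T = Polynomial.C (T.eval 0) := by
  set c : ℕ → ℚ := fun i => (-1) ^ i / ((2 * n - 4).descFactorial i : ℚ)
  set E : ℕ → ℚ[X] := fun p => (n.choose p : ℚ) • A p
  have hQ : ∀ m : ℕ, derivative (quadForm (n : ℚ) E (m + 1)) =
      (2 * n - 2 - m : ℚ) • quadForm (n : ℚ) E m :=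
    derivative_quadForm (by simp [E, hA0]) (derivative_choose_smul_appell hA n)
  have hc : ∀ i < n, c (i + 1) • derivative (quadForm (n : ℚ) E (i + 3)) =
      -(c i • quadForm (n : ℚ) E (i + 2)) := by
    intro i hi
    have he : ((2 * n - 4 : ℕ) : ℚ) - i = 2 * n - 2 - (i + 2 : ℕ) := by
      push_cast [Nat.cast_sub (by omega : 4 ≤ 2 * n)]; ring
    rw [hQ, smul_smul, ← he, neg_one_pow_div_descFactorial_succ_mul (by omega), neg_smul]
  have hQ2 : derivative (quadForm (n : ℚ) E 2) = 0 := by rw [hQ 1, quadForm_one, smul_zero]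
  have hK : (2 * n ^ 2 * (n - 1) : ℚ) ≠ 0 := by
    have : (1 : ℚ) < n := by exact_mod_cast (by omega : 1 < n)
    positivity
  have hsum := congrArg derivative (smul_trSum_eq A c (by omega : 1 ≤ n))
  rw [← show T = trSum A c n from hT, derivative_smul, derivative_sum_range_smul_mul_telescope
      (derivative_descFactorial_smul_appell hA0 hA n) hQ2 n hc,
    Nat.descFactorial_of_lt n.lt_succ_self, Nat.cast_zero, zero_smul, zero_mul, smul_zero,
    smul_eq_zero] at hsum
  rw [← coeff_zero_eq_eval_zero]
  exact eq_C_of_derivative_eq_zero (hsum.resolve_left hK)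
end

section
/- Let A : ℕ → ℚ[X] be an Appell sequence and n ≥ 1. For x : ℚ define the Sylvester-type matrix M(x) of size (2n−1) × (2n−1) over ℚ as follows: for 0 ≤ r ≤ n−2 (the first n−1 rows), the entry in row r and column c equals C(n, c−r) · (A (c−r)).eval x if 0 ≤ c−r ≤ n and 0 otherwise; for 0 ≤ r ≤ n−1 (the last n rows, indexed by row n−1+r), the entry in column c equals (n−(c−r)) · C(n, c−r) · (A (c−r)).eval x if 0 ≤ c−r ≤ n−1 and 0 otherwise. (These are the shifted coefficient rows of the binary form α_x(X,Y) = ∑_{i=0}^n C(n,i)·A_i(x)·X^{n−i}Y^i and of its X-derivative.) Then the discriminant-type determinant Discr_n(A)(x) := det M(x) is independent of x: for all x, det M(x) = det M(0). -/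
/-!
For an Appell sequence, `A n (x + t) = ∑ i, C(n, i) A i (x) t ^ (n - i)`, so the binary form
`α_x(X, 1)` is the Taylor shift `A n (X + x)` of `A n`. After reversing the order of its rows
and of its columns, `M(x)` is the transposed Sylvester matrix of `f = A n (X + x)` and `f'` with
formal degrees `n` and `n - 1`, so `det M(x) = Res(f, f')`, and resultants are invariant under
translation.
-/

open Polynomial
open scoped Matrix

namespace Polynomial

variable {R : Type*} [CommRing R]

lemma sylvester_apply (f g : R[X]) (m n : ℕ) (i j : Fin (m + n)) :
    sylvester f g m n i j =
      if (j : ℕ) < m then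
        if (j : ℕ) ≤ i ∧ (i : ℕ) ≤ j + n then g.coeff (i - j) else 0
      else
        if (j : ℕ) - m ≤ i ∧ (i : ℕ) ≤ j - m + m then f.coeff (i - (j - m)) else 0 := by
  induction j using Fin.addCases <;> simp [sylvester]

lemma derivative_taylor (f : R[X]) (r : R) :
    derivative (taylor r f) = taylor r (derivative f) := by
  simp [taylor_apply, derivative_comp]

lemma coeff_taylor_of_natDegree_le {f : R[X]} {m : ℕ} (r : R) (hf : f.natDegree ≤ m) :
    (taylor r f).coeff m = f.coeff m := by
  rcases hf.eq_or_lt with rfl | hlt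
  · exact coeff_taylor_natDegree r f
  · rw [coeff_eq_zero_of_natDegree_lt hlt,
      coeff_eq_zero_of_natDegree_lt (by rwa [natDegree_taylor])]

/-- Padding the degrees from `natDegree` up to `m`, `n` multiplies both resultants by the same
power of leading coefficients, so `resultant_taylor` extends to formal degrees. -/
lemma resultant_taylor_of_natDegree_le {f g : R[X]} {m n : ℕ} (r : R)
    (hf : f.natDegree ≤ m) (hg : g.natDegree ≤ n) :
    resultant (taylor r f) (taylor r g) m n = resultant f g m n := by
  obtain ⟨k, rfl⟩ := Nat.exists_eq_add_of_le hf
  obtain ⟨l, rfl⟩ := Nat.exists_eq_add_of_le hg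
  rw [resultant_add_right_deg _ _ _ _ _ (natDegree_taylor g r).le,
    resultant_add_left_deg _ _ _ _ _ (natDegree_taylor f r).le,
    resultant_add_right_deg _ _ _ _ _ le_rfl, resultant_add_left_deg _ _ _ _ _ le_rfl,
    coeff_taylor_of_natDegree_le r hf, coeff_taylor_of_natDegree_le r le_rfl,
    ← resultant_taylor f g r, natDegree_taylor, natDegree_taylor]

end Polynomial

variable {R : Type*} [CommRing R] [IsDomain R] [CharZero R]

def IsAppell (A : ℕ → R[X]) : Prop :=
  derivative (A 0) = 0 ∧ ∀ k : ℕ, derivative (A (k + 1)) = (k + 1) • A k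

namespace IsAppell

variable {A : ℕ → R[X]} (hA : IsAppell A)
include hA

lemma hasseDeriv_eq (i j : ℕ) : hasseDeriv i (A j) = j.choose i • A (j - i) := by
  induction i with
  | zero => simp
  | succ i ih =>
    have hcomp : (i + 1) • hasseDeriv (i + 1) (A j) = derivative (hasseDeriv i (A j)) := by
      have := LinearMap.congr_fun (hasseDeriv_comp (R := R) 1 i) (A j)
      simpa only [LinearMap.coe_comp, Function.comp_apply, hasseDeriv_one, add_comm 1 i,
        Nat.choose_one_right, LinearMap.smul_apply] using this.symm
    rw [ih, map_nsmul] at hcomp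
    apply nsmul_right_injective (Nat.succ_ne_zero i)
    dsimp only
    rw [hcomp, smul_smul]
    rcases lt_or_ge i j with h | h
    · obtain ⟨k, hk⟩ : ∃ k, j - i = k + 1 := ⟨j - i - 1, by omega⟩
      have hchoose := Nat.choose_succ_right_eq j i
      rw [hk] at hchoose
      rw [hk, hA.2 k, smul_smul, show j - (i + 1) = k by omega, mul_comm (i + 1), hchoose]
    · rw [show j - i = 0 by omega, hA.1, Nat.choose_eq_zero_of_lt (by omega : j < i + 1)]
      simp

lemma coeff_taylor (x : R) (n j : ℕ) :
    (taylor x (A n)).coeff j = n.choose j * (A (n - j)).eval x := by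
  rw [taylor_coeff, hA.hasseDeriv_eq, eval_smul, nsmul_eq_mul]

lemma natDegree_le (n : ℕ) : (A n).natDegree ≤ n := by
  refine natDegree_le_iff_coeff_eq_zero.2 fun j hj => ?_
  rw [← taylor_zero (A n), hA.coeff_taylor, Nat.choose_eq_zero_of_lt (by exact_mod_cast hj),
    Nat.cast_zero, zero_mul]

end IsAppell

def appellSylvester (A : ℕ → R[X]) (n : ℕ) (x : R) :
    Matrix (Fin (2 * n - 1)) (Fin (2 * n - 1)) R :=
  Matrix.of fun r c =>
    if (r : ℕ) < n - 1 then
      (if (r : ℕ) ≤ (c : ℕ) ∧ (c : ℕ) - (r : ℕ) ≤ n then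
        (n.choose ((c : ℕ) - (r : ℕ)) : R) * (A ((c : ℕ) - (r : ℕ))).eval x
      else 0)
    else
      (if (r : ℕ) - (n - 1) ≤ (c : ℕ) ∧ (c : ℕ) - ((r : ℕ) - (n - 1)) ≤ n - 1 then
        ((n - ((c : ℕ) - ((r : ℕ) - (n - 1))) : ℕ) : R) *
          (n.choose ((c : ℕ) - ((r : ℕ) - (n - 1))) : R) *
          (A ((c : ℕ) - ((r : ℕ) - (n - 1)))).eval x
      else 0)

def revSylvesterIndex (n : ℕ) : Fin (2 * n - 1) ≃ Fin (n + (n - 1)) :=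
  Fin.revPerm.trans (finCongr (by omega))

/-- With `f = A n (X + x)`, the rows of `appellSylvester` hold the coefficients of
`X ^ r * X ^ n f(1 / X)` and `X ^ r * X ^ (n - 1) f'(1 / X)` in increasing degree; reversal turns
them into those of `X ^ r * f` and `X ^ r * f'`. -/
lemma IsAppell.appellSylvester_eq {A : ℕ → R[X]} (hA : IsAppell A) (n : ℕ) (x : R) :
    appellSylvester A n x =
      ((sylvester (taylor x (A n)) (derivative (taylor x (A n))) n (n - 1)).submatrix
        (revSylvesterIndex n) (revSylvesterIndex n))ᵀ := by
  ext r c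
  have hr := r.isLt
  have hc := c.isLt
  simp only [appellSylvester, Matrix.of_apply, Matrix.transpose_apply, Matrix.submatrix_apply,
    sylvester_apply, revSylvesterIndex, Equiv.trans_apply, Fin.revPerm_apply, finCongr_apply,
    Fin.val_cast, Fin.val_rev, coeff_derivative, hA.coeff_taylor]
  rcases lt_or_ge (r : ℕ) (n - 1) with hrt | hrb
  · have hrt' : ¬2 * n - 1 - ((r : ℕ) + 1) < n := by omega
    simp only [hrt, hrt', if_true, if_false]
    split_ifs with hL hR hR
    · obtain ⟨k, hk⟩ : ∃ k, (c : ℕ) = r + k := ⟨c - r, by omega⟩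
      rw [show 2 * n - 1 - (↑c + 1) - (2 * n - 1 - (↑r + 1) - n) = n - k by omega,
        show (c : ℕ) - r = k by omega, Nat.sub_sub_self (by omega), Nat.choose_symm (by omega)]
    all_goals first | rfl | omega
  · have hrb' : 2 * n - 1 - ((r : ℕ) + 1) < n := by omega
    simp only [hrb', not_lt.2 hrb, if_true, if_false]
    split_ifs with hL hR hR
    · obtain ⟨k, hk⟩ : ∃ k, (r : ℕ) = c + k := ⟨r - c, by omega⟩
      rw [show 2 * n - 1 - (↑c + 1) - (2 * n - 1 - (↑r + 1)) = k by omega,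
        show (c : ℕ) - (r - (n - 1)) = n - (k + 1) by omega, Nat.sub_sub_self (by omega),
        Nat.choose_symm (by omega)]
      push_cast
      ring
    all_goals first | rfl | omega

lemma IsAppell.det_appellSylvester {A : ℕ → R[X]} (hA : IsAppell A) (n : ℕ) (x : R) :
    (appellSylvester A n x).det = resultant (A n) (derivative (A n)) n (n - 1) := by
  rw [hA.appellSylvester_eq, Matrix.det_transpose, Matrix.det_submatrix_equiv_self,
    derivative_taylor]
  exact resultant_taylor_of_natDegree_le x (hA.natDegree_le n)
    ((natDegree_derivative_le _).trans (Nat.sub_le_sub_right (hA.natDegree_le n) 1))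

theorem discriminant_constant_general
    (A : ℕ → Polynomial ℚ)
    (hA0 : Polynomial.derivative (A 0) = 0)
    (hA : ∀ k : ℕ, Polynomial.derivative (A (k + 1)) = (k + 1) • A k)
    (n : ℕ)
    (M : ℚ → Matrix (Fin (2 * n - 1)) (Fin (2 * n - 1)) ℚ)
    (hM : ∀ (x : ℚ) (r c : Fin (2 * n - 1)),
      M x r c =
        if (r : ℕ) < n - 1 then
          (if (r : ℕ) ≤ (c : ℕ) ∧ (c : ℕ) - (r : ℕ) ≤ n then
            (n.choose ((c : ℕ) - (r : ℕ)) : ℚ) * (A ((c : ℕ) - (r : ℕ))).eval x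
          else 0)
        else
          (if (r : ℕ) - (n - 1) ≤ (c : ℕ) ∧ (c : ℕ) - ((r : ℕ) - (n - 1)) ≤ n - 1 then
            ((n - ((c : ℕ) - ((r : ℕ) - (n - 1))) : ℕ) : ℚ) *
              (n.choose ((c : ℕ) - ((r : ℕ) - (n - 1))) : ℚ) *
              (A ((c : ℕ) - ((r : ℕ) - (n - 1)))).eval x
          else 0)) :
    ∀ x : ℚ, (M x).det = (M 0).det := by
  have hAppell : IsAppell A := ⟨hA0, hA⟩
  have hM_eq (x : ℚ) : M x = appellSylvester A n x := Matrix.ext (hM x)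
  intro x
  rw [hM_eq, hM_eq, hAppell.det_appellSylvester, hAppell.det_appellSylvester]

/-- For an Appell sequence `A` and `n ≥ 1`, the discriminant-type
determinant of the `(2n−1) × (2n−1)` Sylvester matrix of the binary form
`α_x(X,Y) = ∑ C(n,i) A_i(x) X^{n−i} Y^i` and its `X`-derivative is independent of `x`. -/
theorem discriminant_constant
    (A : ℕ → Polynomial ℚ)
    (hA0 : Polynomial.derivative (A 0) = 0)
    (hA : ∀ k : ℕ, Polynomial.derivative (A (k + 1)) = (k + 1) • A k)
    (n : ℕ) (hn : 1 ≤ n)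
    (M : ℚ → Matrix (Fin (2 * n - 1)) (Fin (2 * n - 1)) ℚ)
    (hM : ∀ (x : ℚ) (r c : Fin (2 * n - 1)),
      M x r c =
        if (r : ℕ) < n - 1 then
          (if (r : ℕ) ≤ (c : ℕ) ∧ (c : ℕ) - (r : ℕ) ≤ n then
            (n.choose ((c : ℕ) - (r : ℕ)) : ℚ) * (A ((c : ℕ) - (r : ℕ))).eval x
          else 0)
        else
          (if (r : ℕ) - (n - 1) ≤ (c : ℕ) ∧ (c : ℕ) - ((r : ℕ) - (n - 1)) ≤ n - 1 then
            ((n - ((c : ℕ) - ((r : ℕ) - (n - 1))) : ℕ) : ℚ) *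
              (n.choose ((c : ℕ) - ((r : ℕ) - (n - 1))) : ℚ) *
              (A ((c : ℕ) - ((r : ℕ) - (n - 1)))).eval x
          else 0)) :
    ∀ x : ℚ, (M x).det = (M 0).det :=
  discriminant_constant_general A hA0 hA n M hM
end

section
/- For every natural number n ≥ 4 the following rational identity holds: ∑_{i=0}^{n} ∑_{j=0}^{i} ∑_{k=0}^{n−i} ( (−1)^i · C(n,i) · C(i,j) · C(n−i,k) / ([2n−4]_i · [2n−4]_{n−i}) ) · ( [n]_k · [n−2]_{n−i−k} − [n−1]_k · [n−1]_{n−i−k} ) · ( [n]_j · [n−2]_{i−j} − [n−1]_j · [n−1]_{i−j} ) = 0. -/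
/-!
For each `i`, the summand factors as a `j`-sum times a `k`-sum. By the Chu–Vandermonde identity
for falling factorials, `∑_j C(i,j) [a]_j [b]_{i-j} = [a+b]_i`, the `j`-sum equals
`[n + (n-2)]_i - [(n-1) + (n-1)]_i = 0`.
-/
open Finset

theorem Nat.descFactorial_add_eq_sum_antidiagonal (a b k : ℕ) :
    (a + b).descFactorial k =
      ∑ ij ∈ antidiagonal k, k.choose ij.1 * (a.descFactorial ij.1 * b.descFactorial ij.2) := by
  have h := Ring.descPochhammer_smeval_add (R := ℤ) (r := a) (s := b) k (Commute.all _ _)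
  simp only [← Nat.cast_add, Polynomial.descPochhammer_smeval_eq_descFactorial] at h
  exact_mod_cast h

theorem sum_choose_mul_descFactorial_sub_eq_zero {R : Type*} [CommRing R] {a b c d : ℕ}
    (h : a + b = c + d) (i : ℕ) :
    ∑ j ∈ range (i + 1), (i.choose j : R) *
      ((a.descFactorial j : R) * b.descFactorial (i - j) -
        c.descFactorial j * d.descFactorial (i - j)) = 0 := by
  have vandermonde (p q : ℕ) : ∑ j ∈ range (i + 1),
      (i.choose j : R) * (p.descFactorial j * q.descFactorial (i - j)) = (p + q).descFactorial i := by
    rw [Nat.descFactorial_add_eq_sum_antidiagonal, Nat.sum_antidiagonal_eq_sum_range_succ_mk]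
    push_cast; rfl
  simp only [mul_sub, sum_sub_distrib, vandermonde, h, sub_self]

/-- Binomial identity (10) of the paper: for `n ≥ 4`,
`∑_{i=0}^{n} ∑_{j=0}^{i} ∑_{k=0}^{n−i}
  ((−1)^i C(n,i) C(i,j) C(n−i,k) / ([2n−4]_i [2n−4]_{n−i}))
  ([n]_k [n−2]_{n−i−k} − [n−1]_k [n−1]_{n−i−k}) ([n]_j [n−2]_{i−j} − [n−1]_j [n−1]_{i−j})
  = 0`. -/
theorem binomial_identity_Ch
    (n : ℕ) (hn : 4 ≤ n) :
    (∑ i ∈ Finset.range (n + 1), ∑ j ∈ Finset.range (i + 1),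
      ∑ k ∈ Finset.range (n - i + 1),
      (((-1 : ℚ) ^ i * (n.choose i) * (i.choose j) * ((n - i).choose k)) /
          ((Nat.descFactorial (2 * n - 4) i : ℚ) *
            (Nat.descFactorial (2 * n - 4) (n - i) : ℚ))) *
        ((Nat.descFactorial n k : ℚ) * (Nat.descFactorial (n - 2) (n - i - k) : ℚ) -
          (Nat.descFactorial (n - 1) k : ℚ) *
            (Nat.descFactorial (n - 1) (n - i - k) : ℚ)) *
        ((Nat.descFactorial n j : ℚ) * (Nat.descFactorial (n - 2) (i - j) : ℚ) -
          (Nat.descFactorial (n - 1) j : ℚ) * (Nat.descFactorial (n - 1) (i - j) : ℚ))) =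
      0 := by
  refine sum_eq_zero fun i _ => ?_
  calc _ = (∑ j ∈ range (i + 1), (i.choose j : ℚ) *
          ((n.descFactorial j : ℚ) * (n - 2).descFactorial (i - j) -
            (n - 1).descFactorial j * (n - 1).descFactorial (i - j))) *
        ∑ k ∈ range (n - i + 1), (-1 : ℚ) ^ i * n.choose i * (n - i).choose k /
            ((2 * n - 4).descFactorial i * (2 * n - 4).descFactorial (n - i)) *
          ((n.descFactorial k : ℚ) * (n - 2).descFactorial (n - i - k) -
            (n - 1).descFactorial k * (n - 1).descFactorial (n - i - k)) := by
        rw [sum_mul_sum]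
        exact sum_congr rfl fun j _ => sum_congr rfl fun k _ => by ring
    _ = 0 := by
        rw [sum_choose_mul_descFactorial_sub_eq_zero (by omega : n + (n - 2) = n - 1 + (n - 1)),
          zero_mul]
end

section
/- Let A : ℕ → ℚ[X] and B : ℕ → ℚ[X] be two Appell sequences. Then for every n, the polynomial Dv_n(A,B) := ∑_{i=0}^{n} (−1)^i · C(n,i) · (A i) · (B (n−i)) ∈ ℚ[X] is constant; explicitly it equals Polynomial.C ( ∑_{i=0}^{n} (−1)^i · C(n,i) · (A i).eval 0 · (B (n−i)).eval 0 ). -/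
/-!
Differentiate `Dv_n(A, B)` term by term with the Appell rule `A_i' = i A_{i-1}`: the term
`i C(n,i) A_{i-1} B_{n-i}` coming from index `i + 1` cancels, by `C(n,i+1) (i+1) = C(n,i) (n-i)`
and the alternating sign, the term `(n-i) C(n,i) A_i B_{n-i-1}` coming from index `i`. So the
derivative vanishes and, as the ring has no additive torsion, `Dv_n(A, B)` is the constant `Dv_n(A, B)(0)`.
-/

open Polynomial Finset

namespace Polynomial

section Semiring

variable {R : Type*} [Semiring R]

def IsAppell (A : ℕ → R[X]) : Prop :=
  derivative (A 0) = 0 ∧ ∀ k : ℕ, derivative (A (k + 1)) = (k + 1) • A k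

theorem IsAppell.derivative_eq {A : ℕ → R[X]} (hA : IsAppell A) (i : ℕ) :
    derivative (A i) = (i : R) • A (i - 1) := by
  rcases i with _ | k
  · simpa using hA.1
  · rw [hA.2 k, Nat.cast_smul_eq_nsmul]
    rfl

end Semiring

variable {R : Type*} [CommRing R]

/-- The paper's `Dv_n(A, B)`. -/
noncomputable def altBinomialConv (A B : ℕ → R[X]) (n : ℕ) : R[X] :=
  ∑ i ∈ range (n + 1), ((-1 : R) ^ i * n.choose i) • (A i * B (n - i))

theorem derivative_altBinomialConv {A B : ℕ → R[X]} (hA : IsAppell A) (hB : IsAppell B)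
    (n : ℕ) : derivative (altBinomialConv A B n) = 0 := by
  set g : ℕ → R[X] := fun i ↦ ((-1 : R) ^ i * n.choose i * (n - i : ℕ)) • (A i * B (n - i - 1))
  set f : ℕ → R[X] := fun i ↦ ((-1 : R) ^ i * n.choose i * i) • (A (i - 1) * B (n - i))
  have hterm (i : ℕ) :
      derivative (((-1 : R) ^ i * n.choose i) • (A i * B (n - i))) = f i + g i := by
    rw [derivative_smul, derivative_mul, hA.derivative_eq, hB.derivative_eq, smul_add,
      smul_mul_assoc, mul_smul_comm, smul_smul, smul_smul]
  have hshift (i : ℕ) (hi : i < n) : f (i + 1) = -g i := by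
    have habsorb : (n.choose (i + 1) : R) * (i + 1 : ℕ) = n.choose i * (n - i : ℕ) := by
      rw [← Nat.cast_mul, ← Nat.cast_mul, n.choose_succ_right_eq]
    simp only [f, g, Nat.add_sub_cancel, show n - (i + 1) = n - i - 1 by omega, ← neg_smul]
    congr 1
    linear_combination (-(-1 : R) ^ i) * habsorb
  calc derivative (altBinomialConv A B n)
      = ∑ i ∈ range (n + 1), f i + ∑ i ∈ range (n + 1), g i := by
        simp only [altBinomialConv, map_sum, hterm, sum_add_distrib]
    _ = ∑ i ∈ range n, f (i + 1) + ∑ i ∈ range n, g i := by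
        rw [sum_range_succ' f, sum_range_succ g]
        simp [f, g]
    _ = 0 := by
        rw [sum_congr rfl fun i hi ↦ hshift i (mem_range.mp hi), sum_neg_distrib, neg_add_cancel]

theorem altBinomialConv_eq_C [IsAddTorsionFree R] {A B : ℕ → R[X]} (hA : IsAppell A)
    (hB : IsAppell B) (n : ℕ) :
    altBinomialConv A B n = C (∑ i ∈ range (n + 1),
      (-1 : R) ^ i * n.choose i * (A i).eval 0 * (B (n - i)).eval 0) := by
  rw [eq_C_of_derivative_eq_zero (derivative_altBinomialConv hA hB n), coeff_zero_eq_eval_zero]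
  simp [altBinomialConv, eval_finsetSum, mul_assoc]

end Polynomial

/-- For two Appell sequences `A`, `B`, the joint alternating binomial
convolution `Dv_n(A,B) = ∑_{i=0}^{n} (−1)^i C(n,i) A_i(x) B_{n−i}(x)` is constant,
equal to its value at `0`. -/
theorem Dv_joint_constant
    (A B : ℕ → Polynomial ℚ)
    (hA0 : Polynomial.derivative (A 0) = 0)
    (hA : ∀ k : ℕ, Polynomial.derivative (A (k + 1)) = (k + 1) • A k)
    (hB0 : Polynomial.derivative (B 0) = 0)
    (hB : ∀ k : ℕ, Polynomial.derivative (B (k + 1)) = (k + 1) • B k)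
    (n : ℕ) :
    (∑ i ∈ Finset.range (n + 1), ((-1 : ℚ) ^ i * (n.choose i)) • (A i * B (n - i))) =
      Polynomial.C (∑ i ∈ Finset.range (n + 1),
        (-1 : ℚ) ^ i * (n.choose i) * (A i).eval 0 * (B (n - i)).eval 0) :=
  altBinomialConv_eq_C ⟨hA0, hA⟩ ⟨hB0, hB⟩ n
end

section
/- Let A : ℕ → ℚ[X] and B : ℕ → ℚ[X] be two Appell sequences and let n ≥ 2. Then the polynomial Tr_n(A,B) := ∑_{i=0}^{n} ∑_{j=0}^{i} ((−1)^i / [2n−2]_i) · C(n,i) · C(i,j) · (A (n−i)) · ( [n]_j·(A j) · [n−1]_{i−j}·(B (i−j+1)) − [n]_{i−j}·(B (i−j)) · [n−1]_j·(A (j+1)) ) ∈ ℚ[X] is constant, i.e. it equals Polynomial.C of its value at 0. -/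
/-!
Put `W j k = A j * B (k + 1) - A (j + 1) * B k`. The Appell property gives
`W' j k = j W (j - 1) k + k W j (k - 1)`, so `W j k` differentiates like `a ^ j * b ^ k` under
`∂/∂a + ∂/∂b`. By Pascal's rule the inner sum of `Tr_n` is `i! S i`, where
`S i = ∑_{j + k = i} C(n - 1, j) C(n - 1, k) W j k` is the umbral image of `(b - a)` times
the coefficient of `t ^ i` in `((1 + a t) (1 + b t)) ^ (n - 1)`; hence
`S' (i + 1) = (2n - 2 - i) S i` and `S' 0 = 0`. Differentiating `Tr_n = ∑ γ_i A (n - i) (i! S i)`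
term by term, the part coming from `A (n - i)' = (n - i) A (n - i - 1)` cancels against the part
coming from `S' (i + 1)`, because the weights `γ_i = (-1)^i C(n, i) / [2n - 2]_i` satisfy
`γ_{i+1} (i + 1)(2n - 2 - i) = -(n - i) γ_i`. So `Tr_n' = 0`.
-/

open Polynomial Finset Finset.Nat

theorem Nat.cast_choose_succ_mul {R : Type*} [CommRing R] (m j : ℕ) :
    (m.choose (j + 1) : R) * (j + 1) = m.choose j * (m - j) := by
  rcases le_or_gt j m with hj | hj
  · have h := congrArg ((↑) : ℕ → R) (Nat.choose_succ_right_eq m j)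
    push_cast [Nat.cast_sub hj] at h
    exact h
  · simp [Nat.choose_eq_zero_of_lt hj, Nat.choose_eq_zero_of_lt (Nat.lt_succ_of_lt hj)]

namespace Finset.Nat

variable {R M : Type*} [Semiring R] [AddCommMonoid M] [Module R M]

theorem sum_antidiagonal_choose_succ_smul (m i : ℕ) (f : ℕ × ℕ → M) :
    ∑ p ∈ antidiagonal (i + 1), ((m + 1).choose p.1 : R) • f p =
      ∑ p ∈ antidiagonal (i + 1), (m.choose p.1 : R) • f p +
        ∑ p ∈ antidiagonal i, (m.choose p.1 : R) • f (p.1 + 1, p.2) := by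
  simp only [sum_antidiagonal_succ, Nat.choose_succ_succ, Nat.cast_add, add_smul,
    sum_add_distrib, Nat.choose_zero_right]
  abel

theorem sum_antidiagonal_choose_succ_smul' (m i : ℕ) (f : ℕ × ℕ → M) :
    ∑ p ∈ antidiagonal (i + 1), ((m + 1).choose p.2 : R) • f p =
      ∑ p ∈ antidiagonal (i + 1), (m.choose p.2 : R) • f p +
        ∑ p ∈ antidiagonal i, (m.choose p.2 : R) • f (p.1, p.2 + 1) := by
  rw [← sum_antidiagonal_swap, ← sum_antidiagonal_swap (n := i),
    ← sum_antidiagonal_swap (f := fun p => (m.choose p.2 : R) • f p)]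
  exact sum_antidiagonal_choose_succ_smul m i (f ∘ Prod.swap)

end Finset.Nat

namespace Polynomial

variable {R : Type*} [CommRing R]

theorem derivative_eq_smul_pred_of_appell {A : ℕ → R[X]} (h0 : derivative (A 0) = 0)
    (h : ∀ k : ℕ, derivative (A (k + 1)) = (k + 1) • A k) (k : ℕ) :
    derivative (A k) = (k : R) • A (k - 1) := by
  cases k with
  | zero => simpa using h0
  | succ k => rw [h k, Nat.cast_smul_eq_nsmul, Nat.add_sub_cancel]

noncomputable def appellCross (A B : ℕ → R[X]) (j k : ℕ) : R[X] :=
  A j * B (k + 1) - A (j + 1) * B k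

noncomputable def appellCrossSum (A B : ℕ → R[X]) (m i : ℕ) : R[X] :=
  ∑ p ∈ antidiagonal i, ((m.choose p.1 : R) * m.choose p.2) • appellCross A B p.1 p.2

section Appell

variable {A B : ℕ → R[X]}

theorem derivative_appellCross (hA : ∀ k, derivative (A k) = (k : R) • A (k - 1))
    (hB : ∀ k, derivative (B k) = (k : R) • B (k - 1)) (j k : ℕ) :
    derivative (appellCross A B j k) =
      (j : R) • appellCross A B (j - 1) k + (k : R) • appellCross A B j (k - 1) := by
  cases j <;> cases k <;>
    simp only [appellCross, derivative_sub, derivative_mul, hA, hB, Nat.add_sub_cancel,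
      Nat.cast_zero, Nat.cast_succ, zero_smul, zero_mul, mul_zero, smul_mul_assoc,
      mul_smul_comm] <;>
    module

theorem derivative_appellCrossSum_zero (hA : ∀ k, derivative (A k) = (k : R) • A (k - 1))
    (hB : ∀ k, derivative (B k) = (k : R) • B (k - 1)) (m : ℕ) :
    derivative (appellCrossSum A B m 0) = 0 := by
  simp [appellCrossSum, derivative_appellCross hA hB]

theorem derivative_appellCrossSum_succ (hA : ∀ k, derivative (A k) = (k : R) • A (k - 1))
    (hB : ∀ k, derivative (B k) = (k : R) • B (k - 1)) (m i : ℕ) :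
    derivative (appellCrossSum A B m (i + 1)) = (2 * m - i : R) • appellCrossSum A B m i := by
  simp only [appellCrossSum, derivative_sum, derivative_smul, derivative_appellCross hA hB,
    smul_add, sum_add_distrib]
  rw [sum_antidiagonal_succ, sum_antidiagonal_succ']
  simp only [Nat.cast_zero, zero_smul, smul_zero, zero_add, Nat.add_sub_cancel, smul_sum,
    ← sum_add_distrib, smul_smul, ← add_smul]
  refine sum_congr rfl fun p hp => ?_
  have hi : (p.1 : R) + p.2 = i := by rw [← Nat.cast_add, mem_antidiagonal.1 hp]
  congr 1
  push_cast
  linear_combination (m.choose p.2 : R) * Nat.cast_choose_succ_mul (R := R) m p.1 +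
    (m.choose p.1 : R) * Nat.cast_choose_succ_mul (R := R) m p.2 -
    (m.choose p.1 * m.choose p.2 : R) * hi

theorem appellCrossSum_eq_sum_choose_succ (m i : ℕ) :
    appellCrossSum A B m i = ∑ p ∈ antidiagonal i,
      ((((m + 1).choose p.1 : R) * m.choose p.2) • (A p.1 * B (p.2 + 1)) -
        (((m + 1).choose p.2 : R) * m.choose p.1) • (A (p.1 + 1) * B p.2)) := by
  cases i with
  | zero => simp [appellCrossSum, appellCross]
  | succ i =>
    rw [sum_sub_distrib]
    simp only [mul_smul]
    rw [sum_antidiagonal_choose_succ_smul, sum_antidiagonal_choose_succ_smul']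
    simp only [appellCrossSum, appellCross, smul_sub, sum_sub_distrib, smul_smul]
    simp only [mul_comm]
    abel

theorem sum_range_choose_smul_descFactorial (a b i : ℕ) :
    ∑ j ∈ range (i + 1), (i.choose j : R) •
        ((a.descFactorial j : R) • A j * ((b.descFactorial (i - j) : R) • B (i - j + 1)) -
          (a.descFactorial (i - j) : R) • B (i - j) * ((b.descFactorial j : R) • A (j + 1))) =
      (i.factorial : R) • ∑ p ∈ antidiagonal i,
        (((a.choose p.1 : R) * b.choose p.2) • (A p.1 * B (p.2 + 1)) -
          ((a.choose p.2 : R) * b.choose p.1) • (A (p.1 + 1) * B p.2)) := by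
  rw [smul_sum, sum_antidiagonal_eq_sum_range_succ_mk]
  refine sum_congr rfl fun j hj => ?_
  obtain ⟨k, rfl⟩ := Nat.exists_eq_add_of_le (Nat.lt_succ_iff.1 (mem_range.1 hj))
  have hfact : ((j + k).factorial : R) = (j + k).choose j * j.factorial * k.factorial := by
    rw [Nat.choose_symm_add, ← Nat.cast_mul, ← Nat.cast_mul,
      Nat.add_choose_mul_factorial_mul_factorial]
  simp only [Nat.add_sub_cancel_left, Nat.descFactorial_eq_factorial_mul_choose, Nat.cast_mul,
    hfact, smul_mul_smul_comm, mul_comm (B k)]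
  module

theorem derivative_sum_smul_mul_eq_zero (hA : ∀ k, derivative (A k) = (k : R) • A (k - 1))
    {E : ℕ → R[X]} {μ γ : ℕ → R} (n : ℕ) (hE0 : derivative (E 0) = 0)
    (hE : ∀ i, derivative (E (i + 1)) = μ i • E i)
    (hγ : ∀ i < n, γ (i + 1) * μ i + γ i * (n - i : ℕ) = 0) :
    derivative (∑ i ∈ range (n + 1), γ i • (A (n - i) * E i)) = 0 := by
  have hterm : ∀ i, derivative (γ i • (A (n - i) * E i)) =
      (γ i * (n - i : ℕ)) • (A (n - i - 1) * E i) +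
        γ i • (A (n - i) * derivative (E i)) := by
    intro i
    rw [derivative_smul, derivative_mul, hA, smul_add, smul_mul_assoc, smul_smul]
  rw [derivative_sum, sum_congr rfl fun i _ => hterm i, sum_add_distrib, sum_range_succ,
    sum_range_succ' (fun i => γ i • (A (n - i) * derivative (E i)))]
  simp only [Nat.sub_self, Nat.cast_zero, mul_zero, zero_smul, add_zero, hE0, smul_zero, hE,
    ← sum_add_distrib]
  refine sum_eq_zero fun i hi => ?_
  rw [Nat.sub_sub, mul_smul_comm, smul_smul, ← add_smul, add_comm, hγ i (mem_range.1 hi),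
    zero_smul]

end Appell

end Polynomial

theorem neg_one_pow_div_descFactorial_mul_choose_recurrence {K : Type*} [Field K] [CharZero K]
    {m i : ℕ} (hm : 1 ≤ m) (hi : i < m + 1) :
    (-1) ^ (i + 1) / ((2 * m).descFactorial (i + 1) : K) * (m + 1).choose (i + 1) *
        ((i + 1) * (2 * m - i)) +
      (-1) ^ i / ((2 * m).descFactorial i : K) * (m + 1).choose i * (m + 1 - i : ℕ) = 0 := by
  have hlin : ((2 * m - i : ℕ) : K) = 2 * m - i := by
    rw [Nat.cast_sub (by omega), Nat.cast_mul, Nat.cast_two]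
  have hlin0 : (2 * m - i : K) ≠ 0 := by rw [← hlin]; norm_cast; omega
  have hd : ((2 * m).descFactorial i : K) ≠ 0 := by
    rw [Nat.cast_ne_zero, Ne, Nat.descFactorial_eq_zero_iff_lt]; omega
  have hchoose := Nat.cast_choose_succ_mul (R := K) (m + 1) i
  rw [Nat.descFactorial_succ, Nat.cast_mul, hlin, Nat.cast_sub hi.le, pow_succ]
  field_simp
  linear_combination (-(-1) ^ i : K) * hchoose

/-- For two Appell sequences `A`, `B` and `n ≥ 2`, the joint
semi-invariant expression
`Tr_n(A,B) = ∑_{i=0}^{n} ∑_{j=0}^{i} ((−1)^i/[2n−2]_i) C(n,i) C(i,j) A_{n−i}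
  ([n]_j A_j [n−1]_{i−j} B_{i−j+1} − [n]_{i−j} B_{i−j} [n−1]_j A_{j+1})`
is constant, equal to `C` of its value at `0`. -/
theorem Tr_joint_constant
    (A B : ℕ → Polynomial ℚ)
    (hA0 : Polynomial.derivative (A 0) = 0)
    (hA : ∀ k : ℕ, Polynomial.derivative (A (k + 1)) = (k + 1) • A k)
    (hB0 : Polynomial.derivative (B 0) = 0)
    (hB : ∀ k : ℕ, Polynomial.derivative (B (k + 1)) = (k + 1) • B k)
    (n : ℕ) (hn : 2 ≤ n)
    (T : Polynomial ℚ)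
    (hT : T = ∑ i ∈ Finset.range (n + 1), ∑ j ∈ Finset.range (i + 1),
        (((-1 : ℚ) ^ i / (Nat.descFactorial (2 * n - 2) i : ℚ)) *
            (n.choose i) * (i.choose j)) •
          (A (n - i) *
            ((Nat.descFactorial n j : ℚ) • A j *
                ((Nat.descFactorial (n - 1) (i - j) : ℚ) • B (i - j + 1)) -
              (Nat.descFactorial n (i - j) : ℚ) • B (i - j) *
                ((Nat.descFactorial (n - 1) j : ℚ) • A (j + 1))))) :
    T = Polynomial.C (T.eval 0) := by
  obtain ⟨m, rfl⟩ : ∃ m, n = m + 1 := ⟨n - 1, by omega⟩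
  have hA' := derivative_eq_smul_pred_of_appell hA0 hA
  have hB' := derivative_eq_smul_pred_of_appell hB0 hB
  have hT' : T = ∑ i ∈ range (m + 1 + 1),
      ((-1 : ℚ) ^ i / (2 * m).descFactorial i * (m + 1).choose i) •
        (A (m + 1 - i) * ((i.factorial : ℚ) • appellCrossSum A B m i)) := by
    rw [hT]
    refine sum_congr rfl fun i _ => ?_
    rw [show 2 * (m + 1) - 2 = 2 * m by omega, Nat.add_sub_cancel,
      appellCrossSum_eq_sum_choose_succ, ← sum_range_choose_smul_descFactorial, mul_sum, smul_sum]
    simp only [mul_smul_comm, mul_smul]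
  have hD : derivative T = 0 := by
    rw [hT']
    refine derivative_sum_smul_mul_eq_zero hA' (μ := fun i => (i + 1) * (2 * m - i)) (m + 1)
      (by simp [derivative_appellCrossSum_zero hA' hB']) (fun i => ?_)
      (fun i hi => neg_one_pow_div_descFactorial_mul_choose_recurrence (by omega) hi)
    rw [derivative_smul, derivative_appellCrossSum_succ hA' hB', smul_smul, smul_smul,
      Nat.factorial_succ]
    congr 1
    push_cast
    ring
  rw [← coeff_zero_eq_eval_zero]
  exact eq_C_of_derivative_eq_zero hD
end

section
/- Let A, B, C : ℕ → ℚ[X] be three Appell sequences and let n ≥ 2. Then the polynomial Tr_n(A,B,C) := ∑_{i=0}^{n} ∑_{j=0}^{i} ( (−1)^i · [n]_j · [n−1]_{i−j} / [2n−2]_i ) · Cb(n,i) · Cb(i,j) · (A (n−i)) · ( (B j)·(C (i−j+1)) − (C j)·(B (i−j+1)) ) ∈ ℚ[X] is constant, i.e. it equals Polynomial.C of its value at 0. -/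
/-!
Reindex by `a = n - i`, `b = j`, `c = i - j + 1`, so that `a + b + c = n + 1`. Up to the constant
`n!² (n-1)! / (2n-2)!`, `Tr_n` becomes `∑ w(a,b,c) (A_a B_b C_c - A_a C_b B_c)` with
`w(a,b,c) = (-1)^(b+c+1) c (a+b)(a+c) (n+a-2)! / (a! b! c! (a+b)! (a+c)!)`.
By the Appell property, the derivative of `∑_{a+b+c=N+1} f(a,b,c) A_a B_b C_c` is
`∑_{a+b+c=N} (∂f)(a,b,c) A_a B_b C_c` with
`∂f(a,b,c) = (a+1) f(a+1,b,c) + (b+1) f(a,b+1,c) + (c+1) f(a,b,c+1)`.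
For this `w`, `∂w` turns out to be symmetric in `b` and `c`, so the two halves of `Tr_n'` cancel.
-/

open Polynomial Finset Nat

section TriSum

variable {M : Type*} [AddCommMonoid M]

def triSum (N : ℕ) (F : ℕ → ℕ → ℕ → M) : M :=
  ∑ x ∈ antidiagonal N, ∑ y ∈ antidiagonal x.2, F x.1 y.1 y.2

theorem triSum_congr {N : ℕ} {F G : ℕ → ℕ → ℕ → M}
    (h : ∀ a b c, a + b + c = N → F a b c = G a b c) : triSum N F = triSum N G :=
  sum_congr rfl fun x hx => sum_congr rfl fun y hy => h _ _ _ <| by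
    rw [HasAntidiagonal.mem_antidiagonal] at hx hy; omega

theorem triSum_add (N : ℕ) (F G : ℕ → ℕ → ℕ → M) :
    triSum N (fun a b c => F a b c + G a b c) = triSum N F + triSum N G := by
  simp only [triSum, sum_add_distrib]

theorem triSum_sub {M : Type*} [AddCommGroup M] (N : ℕ) (F G : ℕ → ℕ → ℕ → M) :
    triSum N (fun a b c => F a b c - G a b c) = triSum N F - triSum N G := by
  simp only [triSum, sum_sub_distrib]

theorem smul_triSum {R : Type*} [DistribSMul R M] (r : R) (N : ℕ) (F : ℕ → ℕ → ℕ → M) :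
    r • triSum N F = triSum N (fun a b c => r • F a b c) := by
  simp only [triSum, smul_sum]

theorem map_triSum {M' G : Type*} [AddCommMonoid M'] [FunLike G M M'] [AddMonoidHomClass G M M']
    (g : G) (N : ℕ) (F : ℕ → ℕ → ℕ → M) :
    g (triSum N F) = triSum N (fun a b c => g (F a b c)) := by
  simp only [triSum, map_sum]

theorem triSum_swap (N : ℕ) (F : ℕ → ℕ → ℕ → M) :
    triSum N (fun a b c => F a c b) = triSum N F :=
  sum_congr rfl fun x _ => Nat.sum_antidiagonal_swap (f := fun y => F x.1 y.1 y.2)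

theorem triSum_succ_of_left_eq_zero {N : ℕ} {F : ℕ → ℕ → ℕ → M} (h : ∀ b c, F 0 b c = 0) :
    triSum (N + 1) F = triSum N (fun a b c => F (a + 1) b c) := by
  simp [triSum, Nat.sum_antidiagonal_succ, h]

theorem triSum_succ_of_middle_eq_zero {N : ℕ} {F : ℕ → ℕ → ℕ → M} (h : ∀ a c, F a 0 c = 0) :
    triSum (N + 1) F = triSum N (fun a b c => F a (b + 1) c) := by
  rw [triSum, Nat.sum_antidiagonal_succ']
  simp only [antidiagonal_zero, sum_singleton, h, zero_add]
  exact sum_congr rfl fun x _ => by rw [Nat.sum_antidiagonal_succ, h, zero_add]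

theorem triSum_succ_of_right_eq_zero {N : ℕ} {F : ℕ → ℕ → ℕ → M} (h : ∀ a b, F a b 0 = 0) :
    triSum (N + 1) F = triSum N (fun a b c => F a b (c + 1)) := by
  simp [triSum, Nat.sum_antidiagonal_succ', h]

theorem sum_range_sum_range_eq_triSum (N : ℕ) (g : ℕ → ℕ → M) :
    ∑ i ∈ range (N + 1), ∑ j ∈ range (i + 1), g i j = triSum N (fun _ b c => g (b + c) b) := by
  rw [triSum, ← Nat.sum_antidiagonal_swap, Nat.sum_antidiagonal_eq_sum_range_succ_mk]
  refine sum_congr rfl fun i _ => ?_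
  rw [Nat.sum_antidiagonal_eq_sum_range_succ_mk]
  exact sum_congr rfl fun j hj => by
    dsimp only [Prod.swap] at hj ⊢
    rw [Nat.add_sub_cancel' (Nat.lt_succ_iff.mp (mem_range.mp hj))]

end TriSum

section TriProdSum

variable {R S : Type*} [CommSemiring S] [SMul R S]

def triProdSum (f : ℕ → ℕ → ℕ → R) (A B C : ℕ → S) (N : ℕ) : S :=
  triSum N fun a b c => f a b c • (A a * B b * C c)

theorem triProdSum_swap_of_symm {f : ℕ → ℕ → ℕ → R} {N : ℕ}
    (hf : ∀ a b c, a + b + c = N → f a b c = f a c b) (A B C : ℕ → S) :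
    triProdSum f A C B N = triProdSum f A B C N := by
  rw [triProdSum, ← triSum_swap]
  exact triSum_congr fun a b c h => by rw [hf a c b (by omega), mul_right_comm]

end TriProdSum

def coeffDeriv {R : Type*} [Semiring R] (f : ℕ → ℕ → ℕ → R) (a b c : ℕ) : R :=
  (a + 1) * f (a + 1) b c + (b + 1) * f a (b + 1) c + (c + 1) * f a b (c + 1)

section Appell

variable {R : Type*} [CommSemiring R]

theorem derivative_eq_of_appell {A : ℕ → R[X]} (hA0 : derivative (A 0) = 0)
    (hA : ∀ k : ℕ, derivative (A (k + 1)) = (k + 1) • A k) (m : ℕ) :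
    derivative (A m) = m • A (m - 1) := by
  cases m with
  | zero => simpa using hA0
  | succ k => simpa using hA k

variable {A B C : ℕ → R[X]}

theorem derivative_smul_mul_mul (hA : ∀ m, derivative (A m) = m • A (m - 1))
    (hB : ∀ m, derivative (B m) = m • B (m - 1)) (hC : ∀ m, derivative (C m) = m • C (m - 1))
    (r : R) (a b c : ℕ) :
    derivative (r • (A a * B b * C c)) =
      (a * r) • (A (a - 1) * B b * C c) + (b * r) • (A a * B (b - 1) * C c) +
        (c * r) • (A a * B b * C (c - 1)) := by
  rw [derivative_smul, derivative_mul, derivative_mul, hA, hB, hC]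
  simp only [smul_eq_C_mul, nsmul_eq_mul, map_mul, map_natCast]
  ring

theorem derivative_triProdSum (hA : ∀ m, derivative (A m) = m • A (m - 1))
    (hB : ∀ m, derivative (B m) = m • B (m - 1)) (hC : ∀ m, derivative (C m) = m • C (m - 1))
    (f : ℕ → ℕ → ℕ → R) (N : ℕ) :
    derivative (triProdSum f A B C (N + 1)) = triProdSum (coeffDeriv f) A B C N := by
  simp only [triProdSum, map_triSum, derivative_smul_mul_mul hA hB hC, triSum_add]
  rw [triSum_succ_of_left_eq_zero (by simp), triSum_succ_of_middle_eq_zero (by simp),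
    triSum_succ_of_right_eq_zero (by simp), ← triSum_add, ← triSum_add]
  simp only [coeffDeriv, add_smul, Nat.add_sub_cancel, Nat.cast_add, Nat.cast_one]

end Appell

theorem cast_descFactorial_eq_factorial_div {K : Type*} [Field K] [CharZero K] {m k : ℕ}
    (h : k ≤ m) : (m.descFactorial k : K) = m ! / (m - k)! := by
  rw [eq_div_iff (Nat.cast_ne_zero.mpr (factorial_ne_zero _)), mul_comm]
  exact_mod_cast factorial_mul_descFactorial h

def trCoeff (n i j : ℕ) : ℚ :=
  ((-1 : ℚ) ^ i * (Nat.descFactorial n j : ℚ) * (Nat.descFactorial (n - 1) (i - j) : ℚ) /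
      (Nat.descFactorial (2 * n - 2) i : ℚ)) * (n.choose i) * (i.choose j)

def trWeight (n a b c : ℕ) : ℚ :=
  (-1) ^ (b + c + 1) * c * (a + b) * (a + c) * ((n + a - 2)! : ℚ) /
    (a ! * b ! * c ! * (a + b)! * (a + c)!)

theorem trCoeff_eq_trWeight {n a b c : ℕ} (hn : 2 ≤ n) (h : a + b + c = n) :
    trCoeff n (b + c) b = n ! * n ! * (n - 1)! / (2 * n - 2)! * trWeight n a b (c + 1) := by
  rcases Nat.eq_zero_or_pos (a + b) with hab | hab
  · obtain ⟨rfl, rfl⟩ : a = 0 ∧ b = 0 := by omega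
    have : (n - 1).descFactorial c = 0 := descFactorial_eq_zero_iff_lt.mpr (by omega)
    simp [trCoeff, trWeight, this]
  obtain ⟨s, hs⟩ := Nat.exists_eq_add_one.mpr hab
  have e1 : n - b = a + c := by omega
  have e2 : n - 1 - c = s := by omega
  have e3 : 2 * n - 2 - (b + c) = n + a - 2 := by omega
  have e4 : n - (b + c) = a := by omega
  rw [trCoeff, trWeight, Nat.add_sub_cancel_left, cast_descFactorial_eq_factorial_div (by omega),
    cast_descFactorial_eq_factorial_div (by omega), cast_descFactorial_eq_factorial_div (by omega),
    Nat.cast_choose ℚ (by omega), Nat.cast_choose ℚ (by omega), e1, e2, e3, e4,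
    Nat.add_sub_cancel_left, hs, Nat.factorial_succ s, Nat.factorial_succ c,
    show a + (c + 1) = a + c + 1 by ring, Nat.factorial_succ (a + c)]
  have hs' : (a : ℚ) + b = s + 1 := by exact_mod_cast hs
  push_cast
  rw [hs']
  field_simp
  ring

theorem coeffDeriv_trWeight {n a b c : ℕ} (hn : 2 ≤ n) (h : a + b + c = n) :
    coeffDeriv (trWeight n) a b c =
      n * (-1) ^ (b + c) * ((n + a - 2)! : ℚ) / (a ! * b ! * c ! * (a + b)! * (a + c)!) := by
  have hm : n + (a + 1) - 2 = n + a - 2 + 1 := by omega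
  have hm' : ((n + a - 2 : ℕ) : ℚ) = a + b + c + a - 2 := by
    rw [Nat.cast_sub (by omega)]; push_cast [← h]; ring
  simp only [coeffDeriv, trWeight, hm, Nat.factorial_succ, show a + 1 + b = a + b + 1 by ring,
    show a + 1 + c = a + c + 1 by ring, show a + (b + 1) = a + b + 1 by ring,
    show a + (c + 1) = a + c + 1 by ring, pow_succ]
  push_cast
  rw [hm', ← h]
  push_cast
  field_simp
  ring

theorem coeffDeriv_trWeight_symm {n a b c : ℕ} (hn : 2 ≤ n) (h : a + b + c = n) :
    coeffDeriv (trWeight n) a b c = coeffDeriv (trWeight n) a c b := by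
  rw [coeffDeriv_trWeight hn h, coeffDeriv_trWeight hn (by omega), add_comm b c]
  ring

theorem sum_trCoeff_eq_triProdSum {S : Type*} [CommRing S] [Algebra ℚ S] {n : ℕ} (hn : 2 ≤ n)
    (A B C : ℕ → S) :
    ∑ i ∈ range (n + 1), ∑ j ∈ range (i + 1),
        trCoeff n i j • (A (n - i) * (B j * C (i - j + 1) - C j * B (i - j + 1))) =
      (n ! * n ! * (n - 1)! / (2 * n - 2)! : ℚ) •
        (triProdSum (trWeight n) A B C (n + 1) - triProdSum (trWeight n) A C B (n + 1)) := by
  rw [sum_range_sum_range_eq_triSum, triProdSum, triProdSum,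
    triSum_succ_of_right_eq_zero (by simp [trWeight]),
    triSum_succ_of_right_eq_zero (by simp [trWeight]), ← triSum_sub, smul_triSum]
  refine triSum_congr fun a b c h => ?_
  rw [trCoeff_eq_trWeight hn h, Nat.add_sub_cancel_left, show n - (b + c) = a by omega, mul_smul,
    ← smul_sub]
  congr 2
  ring

/-- For three Appell sequences `A`, `B`, `C` and `n ≥ 2`, the joint
semi-invariant expression
`Tr_n(A,B,C) = ∑_{i=0}^{n} ∑_{j=0}^{i} ((−1)^i [n]_j [n−1]_{i−j} / [2n−2]_i)
  C(n,i) C(i,j) A_{n−i} (B_j C_{i−j+1} − C_j B_{i−j+1})`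
is constant, equal to `Polynomial.C` of its value at `0`. -/
theorem Tr_three_constant
    (A B C : ℕ → Polynomial ℚ)
    (hA0 : Polynomial.derivative (A 0) = 0)
    (hA : ∀ k : ℕ, Polynomial.derivative (A (k + 1)) = (k + 1) • A k)
    (hB0 : Polynomial.derivative (B 0) = 0)
    (hB : ∀ k : ℕ, Polynomial.derivative (B (k + 1)) = (k + 1) • B k)
    (hC0 : Polynomial.derivative (C 0) = 0)
    (hC : ∀ k : ℕ, Polynomial.derivative (C (k + 1)) = (k + 1) • C k)
    (n : ℕ) (hn : 2 ≤ n)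
    (T : Polynomial ℚ)
    (hT : T = ∑ i ∈ Finset.range (n + 1), ∑ j ∈ Finset.range (i + 1),
        (((-1 : ℚ) ^ i * (Nat.descFactorial n j : ℚ) *
              (Nat.descFactorial (n - 1) (i - j) : ℚ) /
            (Nat.descFactorial (2 * n - 2) i : ℚ)) *
          (n.choose i) * (i.choose j)) •
          (A (n - i) * (B j * C (i - j + 1) - C j * B (i - j + 1)))) :
    T = Polynomial.C (T.eval 0) := by
  have hA' := derivative_eq_of_appell hA0 hA
  have hB' := derivative_eq_of_appell hB0 hB
  have hC' := derivative_eq_of_appell hC0 hC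
  have hT' := hT.trans (sum_trCoeff_eq_triProdSum hn A B C)
  have hdT : derivative T = 0 := by
    rw [hT', derivative_smul, map_sub, derivative_triProdSum hA' hB' hC',
      derivative_triProdSum hA' hC' hB',
      triProdSum_swap_of_symm (f := coeffDeriv (trWeight n)) fun _ _ _ h =>
        coeffDeriv_trWeight_symm hn h,
      sub_self, smul_zero]
  rw [← coeff_zero_eq_eval_zero]
  exact eq_C_of_derivative_eq_zero hdT
end

section
/- For every natural number n, the Bernoulli polynomials satisfy the identity ∑_{i=0}^{n} (−1)^i · C(n,i) · (Polynomial.bernoulli i) · (Polynomial.bernoulli (n−i)) = Polynomial.C ((1 − n) · bernoulli n) in ℚ[X]; that is, the alternating binomial convolution of Bernoulli polynomials is the constant (1−n)·B_n. -/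
/-!
Let `P_t(X) = ∑ Bₙ(t) Xⁿ / n! = X e^{tX} / (e^X - 1)`. The reflection `Bₙ(1 - t) = (-1)ⁿ Bₙ(t)`
says `P_t(-X) = P_{1-t}(X)`, so `P_t(-X) P_t(X) = X² e^X / (e^X - 1)²` does not depend on `t`.
With `Q = X / (e^X - 1) = ∑ Bₙ Xⁿ / n!` this is `Q - X Q'`, whose `n`-th coefficient is
`(1 - n) Bₙ / n!`; the `n`-th coefficient of `P_t(-X) P_t(X)` is the alternating convolution
divided by `n!`.
-/

open PowerSeries Nat Finset
open scoped Polynomial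

namespace PowerSeries

variable {A : Type*} [CommRing A] [Algebra ℚ A]

theorem mul_exp_sub_one_cancel {f g : A⟦X⟧} (h : f * (exp A - 1) = g * (exp A - 1)) :
    f = g := by
  refine mul_X_cancel ?_
  rw [← bernoulliPowerSeries_mul_exp_sub_one, ← mul_assoc, ← mul_assoc, mul_right_comm f,
    mul_right_comm g, h]

theorem bernoulliPowerSeries_sub_X_mul_derivative_mul_sq :
    (bernoulliPowerSeries A - X * d⁄dX A (bernoulliPowerSeries A)) * (exp A - 1) ^ 2 =
      X ^ 2 * exp A := by
  set Q := bernoulliPowerSeries A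
  have hQ : Q * (exp A - 1) = X := bernoulliPowerSeries_mul_exp_sub_one A
  have hQ' : d⁄dX A Q * (exp A - 1) + Q * exp A = 1 := by
    simpa [derivative_exp, mul_comm, add_comm] using congrArg (d⁄dX A) hQ
  linear_combination (exp A - 1 + X * exp A) * hQ - X * (exp A - 1) * hQ'

theorem coeff_bernoulliPowerSeries_sub_X_mul_derivative (n : ℕ) :
    coeff n (bernoulliPowerSeries A - X * d⁄dX A (bernoulliPowerSeries A)) =
      algebraMap ℚ A ((1 - n) * bernoulli n / n !) := by
  have hX : coeff n (X * d⁄dX A (bernoulliPowerSeries A)) =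
      algebraMap ℚ A (n * (bernoulli n / n !)) := by
    cases n with
    | zero => simp
    | succ m => simp [coeff_succ_X_mul, coeff_derivative, bernoulliPowerSeries, mul_comm]
  rw [map_sub, hX, bernoulliPowerSeries, coeff_mk, ← map_sub]
  ring_nf

end PowerSeries

namespace Polynomial

variable {A : Type*} [CommRing A] [Algebra ℚ A]

noncomputable def bernoulliEGF (t : A) : A⟦X⟧ :=
  PowerSeries.mk fun n => aeval t ((1 / n ! : ℚ) • bernoulli n)

theorem coeff_bernoulliEGF (t : A) (n : ℕ) :
    PowerSeries.coeff n (bernoulliEGF t) = (1 / n ! : ℚ) • aeval t (bernoulli n) := by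
  rw [bernoulliEGF, coeff_mk, map_smul]

theorem bernoulliEGF_mul_exp_sub_one (t : A) :
    bernoulliEGF t * (exp A - 1) = PowerSeries.X * rescale t (exp A) :=
  bernoulli_generating_function t

theorem rescale_neg_one_bernoulliEGF (t : A) :
    rescale (-1 : A) (bernoulliEGF t) = bernoulliEGF (1 - t) := by
  ext n
  rw [coeff_rescale, coeff_bernoulliEGF, coeff_bernoulliEGF, mul_smul_comm,
    show (1 - t : A) = aeval t (1 - X : ℚ[X]) by simp, ← aeval_comp, bernoulli_comp_one_sub_X]
  simp

theorem rescale_neg_one_bernoulliEGF_mul_bernoulliEGF (t : A) :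
    rescale (-1 : A) (bernoulliEGF t) * bernoulliEGF t =
      bernoulliPowerSeries A - PowerSeries.X * d⁄dX A (bernoulliPowerSeries A) := by
  refine mul_exp_sub_one_cancel (mul_exp_sub_one_cancel ?_)
  rw [rescale_neg_one_bernoulliEGF]
  calc bernoulliEGF (1 - t) * bernoulliEGF t * (exp A - 1) * (exp A - 1)
      = (bernoulliEGF (1 - t) * (exp A - 1)) * (bernoulliEGF t * (exp A - 1)) := by ring
    _ = PowerSeries.X ^ 2 * (rescale (1 - t) (exp A) * rescale t (exp A)) := by
      rw [bernoulliEGF_mul_exp_sub_one, bernoulliEGF_mul_exp_sub_one]; ring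
    _ = PowerSeries.X ^ 2 * exp A := by
      rw [exp_mul_exp_eq_exp_add, sub_add_cancel, rescale_one, RingHom.id_apply]
    _ = _ := by rw [← bernoulliPowerSeries_sub_X_mul_derivative_mul_sq]; ring

theorem sum_range_neg_one_pow_mul_choose_smul_aeval_bernoulli_mul (t : A) (n : ℕ) :
    ∑ i ∈ range (n + 1), ((-1 : ℚ) ^ i * n.choose i) •
        (aeval t (bernoulli i) * aeval t (bernoulli (n - i))) =
      algebraMap ℚ A ((1 - n) * _root_.bernoulli n) := by
  calc _ = (n ! : ℚ) • PowerSeries.coeff n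
          (rescale (-1 : A) (bernoulliEGF t) * bernoulliEGF t) := by
        rw [PowerSeries.coeff_mul, Nat.sum_antidiagonal_eq_sum_range_succ_mk, smul_sum]
        refine sum_congr rfl fun i hi => ?_
        have hc : (n.choose i : ℚ) = n ! * (1 / i !) * (1 / (n - i)!) := by
          rw [Nat.cast_choose ℚ (Nat.lt_succ_iff.mp (mem_range.mp hi))]
          field_simp
        rw [coeff_rescale, coeff_bernoulliEGF, coeff_bernoulliEGF, hc]
        simp only [Algebra.smul_def, map_mul, map_pow, map_neg, map_one]
        ring
    _ = (n ! : ℚ) • PowerSeries.coeff n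
          (bernoulliPowerSeries A - PowerSeries.X * d⁄dX A (bernoulliPowerSeries A)) := by
        rw [rescale_neg_one_bernoulliEGF_mul_bernoulliEGF]
    _ = _ := by
        rw [coeff_bernoulliPowerSeries_sub_X_mul_derivative, Algebra.smul_def, ← map_mul]
        field_simp

end Polynomial

/-- The alternating binomial convolution of Bernoulli polynomials is
constant: `∑_{i=0}^{n} (−1)^i C(n,i) B_i(x) B_{n−i}(x) = (1 − n) B_n`. -/
theorem bernoulli_alternating_convolution
    (n : ℕ) :
    (∑ i ∈ Finset.range (n + 1), ((-1 : ℚ) ^ i * (n.choose i)) •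
        (Polynomial.bernoulli i * Polynomial.bernoulli (n - i))) =
      Polynomial.C ((1 - (n : ℚ)) * bernoulli n) := by
  simpa only [Polynomial.aeval_X_left_apply, Polynomial.algebraMap_eq] using
    Polynomial.sum_range_neg_one_pow_mul_choose_smul_aeval_bernoulli_mul (Polynomial.X : ℚ[X]) n
end

section
/- Let A : ℕ → ℚ[X] be an Appell sequence. Then for every n, ∑_{i=0}^{n} (−1)^i · C(n,i) · (A i) · X^{n−i} = Polynomial.C ((−1)^n · (A n).eval 0) in ℚ[X]; equivalently, A_n(x) can be recovered as A_n(x) = ∑_{i=0}^{n−1} (−1)^{n+i+1} · C(n,i) · A_i(x) · x^{n−i} + A_n(0). In particular this holds for the Bernoulli and Hermite polynomials. -/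
/-!
The alternating sum `S_n = ∑ (-1)^i C(n,i) A_i B_{n-i}` of two Appell sequences has zero
derivative: differentiating the `i`-th term produces `i C(n,i) A_{i-1} B_{n-i}` and
`(n-i) C(n,i) A_i B_{n-i-1}`, and since `(i+1) C(n,i+1) = (n-i) C(n,i)` these cancel in pairs
between consecutive terms. Taking `B_k = X^k`, `S_n` is therefore the constant `S_n(0)`, and at
`0` only the term `i = n` survives, giving `(-1)^n A_n(0)`. Solving for `A_n` gives the recovery
formula.
-/

open Polynomial Finset

theorem neg_one_pow_succ_mul_choose_succ_add {R : Type*} [CommRing R] (n i : ℕ) :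
    (-1 : R) ^ (i + 1) * n.choose (i + 1) * (i + 1 : ℕ) + (-1) ^ i * n.choose i * (n - i : ℕ) =
      0 := by
  have h := congrArg (Nat.cast : ℕ → R) (Nat.choose_succ_right_eq n i)
  push_cast at h ⊢
  linear_combination (-(-1 : R) ^ i) * h

namespace Polynomial

structure IsAppell_s19 {R : Type*} [Semiring R] (A : ℕ → R[X]) : Prop where
  derivative_zero : derivative (A 0) = 0
  derivative_succ : ∀ k : ℕ, derivative (A (k + 1)) = (k + 1) • A k

theorem isAppell_X_pow {R : Type*} [Semiring R] : IsAppell_s19 fun k : ℕ ↦ (X ^ k : R[X]) where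
  derivative_zero := by simp
  derivative_succ k := by simp [nsmul_eq_mul]

variable {R : Type*} [CommRing R]

/-- The joint semi-invariant `Dv_n` of a pair of Appell sequences. -/
noncomputable def jointSemiinvariant (A B : ℕ → R[X]) (n : ℕ) : R[X] :=
  ∑ i ∈ range (n + 1), ((-1 : R) ^ i * n.choose i) • (A i * B (n - i))

theorem IsAppell_s19.derivative_jointSemiinvariant {A B : ℕ → R[X]} (hA : IsAppell_s19 A)
    (hB : IsAppell_s19 B) (n : ℕ) : derivative (jointSemiinvariant A B n) = 0 := by
  set c : ℕ → R := fun i ↦ (-1 : R) ^ i * n.choose i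
  have hpair : ∀ i ∈ range n, c (i + 1) • (derivative (A (i + 1)) * B (n - (i + 1))) +
      c i • (A i * derivative (B (n - i))) = 0 := by
    intro i hi
    obtain ⟨m, hm⟩ : ∃ m, n - i = m + 1 := ⟨n - i - 1, by grind⟩
    have hm' : n - (i + 1) = m := by omega
    rw [hm', hm, hA.derivative_succ, hB.derivative_succ, ← Nat.cast_smul_eq_nsmul R,
      ← Nat.cast_smul_eq_nsmul R, smul_mul_assoc, mul_smul_comm, smul_smul, smul_smul, ← add_smul,
      ← hm]
    simp only [c]
    rw [neg_one_pow_succ_mul_choose_succ_add, zero_smul]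
  simp only [jointSemiinvariant, map_sum, derivative_smul, derivative_mul, smul_add,
    sum_add_distrib]
  rw [sum_range_succ' (fun i ↦ c i • (derivative (A i) * B (n - i))),
    sum_range_succ (fun i ↦ c i • (A i * derivative (B (n - i)))), add_add_add_comm,
    ← sum_add_distrib, sum_eq_zero hpair]
  simp [hA.derivative_zero, hB.derivative_zero]

theorem IsAppell_s19.jointSemiinvariant_X_pow [IsAddTorsionFree R] {A : ℕ → R[X]}
    (hA : IsAppell_s19 A) (n : ℕ) :
    jointSemiinvariant A (X ^ ·) n = C ((-1 : R) ^ n * (A n).eval 0) := by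
  rw [eq_C_of_derivative_eq_zero (hA.derivative_jointSemiinvariant isAppell_X_pow n),
    coeff_zero_eq_eval_zero, jointSemiinvariant, eval_finsetSum, sum_range_succ,
    sum_eq_zero fun i hi ↦ ?_]
  · simp
  · simp [zero_pow (Nat.sub_ne_zero_of_lt (mem_range.mp hi))]

theorem eq_sum_add_C_of_jointSemiinvariant_X_pow {A : ℕ → R[X]} {n : ℕ}
    (h : jointSemiinvariant A (X ^ ·) n = C ((-1 : R) ^ n * (A n).eval 0)) :
    A n = (∑ i ∈ range n, ((-1 : R) ^ (n + i + 1) * n.choose i) • (A i * X ^ (n - i))) +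
      C ((A n).eval 0) := by
  rw [jointSemiinvariant, sum_range_succ] at h
  have hsum : ∑ i ∈ range n, ((-1 : R) ^ (n + i + 1) * n.choose i) • (A i * X ^ (n - i)) =
      -(-1 : R) ^ n • ∑ i ∈ range n, ((-1 : R) ^ i * n.choose i) • (A i * X ^ (n - i)) := by
    rw [smul_sum]
    refine sum_congr rfl fun i _ ↦ ?_
    rw [smul_smul]
    ring_nf
  have hsq : ((-1 : R[X]) ^ n) ^ 2 = 1 := by rw [← pow_mul, pow_mul', neg_one_sq, one_pow]
  rw [hsum]
  simp only [Nat.sub_self, pow_zero, mul_one, Nat.choose_self, Nat.cast_one, smul_eq_C_mul,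
    map_mul, map_neg, map_pow, map_one] at h ⊢
  linear_combination (-1 : R[X]) ^ n * h + (C (eval 0 (A n)) - A n) * hsq

end Polynomial

open Polynomial Finset in
/-- For an Appell sequence `A`,
`∑_{i=0}^{n} (−1)^i C(n,i) A_i(x) x^{n−i} = (−1)^n A_n(0)`; equivalently,
`A_n(x) = ∑_{i=0}^{n−1} (−1)^{n+i+1} C(n,i) A_i(x) x^{n−i} + A_n(0)`. -/
theorem appell_recovery
    (A : ℕ → Polynomial ℚ)
    (hA0 : Polynomial.derivative (A 0) = 0)
    (hA : ∀ k : ℕ, Polynomial.derivative (A (k + 1)) = (k + 1) • A k)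
    (n : ℕ) :
    (∑ i ∈ Finset.range (n + 1), ((-1 : ℚ) ^ i * (n.choose i)) •
        (A i * Polynomial.X ^ (n - i))) =
      Polynomial.C ((-1 : ℚ) ^ n * (A n).eval 0) ∧
    A n = (∑ i ∈ Finset.range n, ((-1 : ℚ) ^ (n + i + 1) * (n.choose i)) •
        (A i * Polynomial.X ^ (n - i))) + Polynomial.C ((A n).eval 0) := by
  have h := (IsAppell_s19.mk hA0 hA).jointSemiinvariant_X_pow n
  exact ⟨h, eq_sum_add_C_of_jointSemiinvariant_X_pow h⟩
end
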